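/- arXiv:1412.0830 — 9 statements merged into one kernel-verified Lean document; each statement's English description precedes it below -/
import Mathlib

section
/- Let E be a set and let 𝒞 and 𝒟 be collections of subsets of E. Then there is a matroid M with ground set E whose set of circuits is exactly 𝒞 and whose set of cocircuits is exactly 𝒟 if and only if all of the following hold: (C1) the empty set is not in 𝒞; (C1*) the empty set is not in 𝒟; (C2) no member of 𝒞 is a proper subset of another member of 𝒞; (C2*) no member of 𝒟 is a proper subset of another member of 𝒟; (O1) |C ∩ D| ≠ 1 for all C ∈ 𝒞 and D ∈ 𝒟; (O2) for every partition E = P ⊔ Q ⊔ {e} either there is C ∈ 𝒞 with e ∈ C ⊆ P ∪ {e} or there is D ∈ 𝒟 with e ∈ D ⊆ Q ∪ {e}; (IM) calling a set I ⊆ E independent if it includes no member of 𝒞, for every independent set I and every set X with I ⊆ X ⊆ E there is a maximal element of the family of independent sets J with I ⊆ J ⊆ X. -/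
/-- A circuit of a matroid: a minimal dependent set. -/
def Matroid.IsCircuit' {α : Type} (M : Matroid α) (C : Set α) : Prop := Minimal M.Dep C

/-- A cocircuit of a matroid: a circuit of the dual matroid. -/
def Matroid.IsCocircuit' {α : Type} (M : Matroid α) (C : Set α) : Prop := Minimal M✶.Dep C

open Set

namespace CCAux


variable {α : Type} {M : Matroid α} {I C D P Q : Set α} {e : α}

/-- Fundamental circuit: if `I` is independent and `e ∈ cl(I) \ I`, there is a minimal
dependent set through `e` inside `insert e I`. -/
lemma exists_min_dep (hI : M.Indep I) (he : e ∈ M.closure I) (heI : e ∉ I) :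
    ∃ C, Minimal M.Dep C ∧ e ∈ C ∧ C ⊆ insert e I := by
  classical
  set J := {x ∈ I | e ∉ M.closure (I \ {x})} with hJdef
  have hJI : J ⊆ I := sep_subset _ _
  have heE : e ∈ M.E := M.mem_ground_of_mem_closure he
  have heJ : e ∈ M.closure J := by
    by_cases hd : (I \ J).Nonempty
    · have hJeq : (⋂ x ∈ I \ J, I \ {x}) = J := by
        ext y
        simp only [mem_iInter, mem_diff, mem_singleton_iff, hJdef, mem_setOf_eq,
          not_and, not_not]
        constructor
        · intro h
          obtain ⟨x₀, hx₀⟩ := hd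
          simp only [hJdef, mem_diff, mem_setOf_eq, not_and, not_not] at hx₀
          have hyI : y ∈ I := (h x₀ ⟨hx₀.1, hx₀.2⟩).1
          refine ⟨hyI, fun hy => ?_⟩
          exact (h y ⟨hyI, fun _ => hy⟩).2 rfl
        · rintro ⟨hyI, hy⟩ x ⟨hxI, hx⟩
          exact ⟨hyI, fun h => hy (h ▸ hx hxI)⟩
      have hUind : M.Indep (⋃ x ∈ I \ J, I \ {x}) :=
        hI.subset (iUnion₂_subset fun i _ => diff_subset)
      have := Matroid.closure_biInter_eq_biInter_closure_of_biUnion_indep hd hUind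
      rw [hJeq] at this
      rw [this, mem_iInter₂]
      rintro x hx
      simp only [hJdef, mem_diff, mem_setOf_eq, not_and, not_not] at hx
      exact hx.2 hx.1
    · have : J = I := hJI.antisymm fun x hx => by
        by_contra h; exact hd ⟨x, hx, h⟩
      rwa [this]
  have heJ' : e ∉ J := fun h => heI (hJI h)
  have hCdep : M.Dep (insert e J) := (hI.subset hJI).insert_dep_iff.mpr ⟨heJ, heJ'⟩
  refine ⟨insert e J, ⟨hCdep, ?_⟩, mem_insert _ _, insert_subset_insert hJI⟩
  intro D hD hDC
  have heD : e ∈ D := by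
    by_contra heD
    have : D ⊆ J := fun x hx => (hDC hx).resolve_left fun h => heD (h ▸ hx)
    exact hD.not_indep ((hI.subset hJI).subset this)
  intro x hx
  rcases hx with rfl | hxJ
  · exact heD
  by_contra hxD
  have hDsub : D ⊆ insert e (J \ {x}) := by
    intro y hy
    rcases hDC hy with rfl | hyJ
    · exact mem_insert _ _
    · exact mem_insert_of_mem _ ⟨hyJ, fun h => hxD (h ▸ hy)⟩
  have hdep2 : M.Dep (insert e (J \ {x})) :=
    hD.superset hDsub (insert_subset heE ((diff_subset.trans hJI).trans hI.subset_ground))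
  have hind2 : M.Indep (J \ {x}) := hI.subset (diff_subset.trans hJI)
  have : e ∈ M.closure (J \ {x}) := (hind2.insert_dep_iff.mp hdep2).1
  exact hxJ.2 (M.closure_subset_closure (diff_subset_diff_left hJI) this)

/-- Every dependent set contains a minimal dependent set. -/
lemma dep_contains_min_dep (hD : M.Dep D) : ∃ C, Minimal M.Dep C ∧ C ⊆ D := by
  obtain ⟨I, hI⟩ := M.exists_isBasis D hD.subset_ground
  have hne : ¬ D ⊆ I := fun h => hD.not_indep (hI.indep.subset h)
  obtain ⟨d, hdD, hdI⟩ := not_subset.mp hne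
  obtain ⟨C, hC, -, hCsub⟩ := exists_min_dep hI.indep (hI.subset_closure hdD) hdI
  exact ⟨C, hC, hCsub.trans (insert_subset hdD hI.subset)⟩

lemma min_dep_diff_indep (hC : Minimal M.Dep C) (he : e ∈ C) : M.Indep (C \ {e}) := by
  by_contra h
  have : M.Dep (C \ {e}) := ⟨h, diff_subset.trans hC.prop.subset_ground⟩
  exact (hC.2 this diff_subset he).2 rfl

lemma min_dep_mem_closure (hC : Minimal M.Dep C) (he : e ∈ C) :
    e ∈ M.closure (C \ {e}) := by
  have hind := min_dep_diff_indep hC he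
  have : M.Dep (insert e (C \ {e})) := by
    rw [insert_diff_singleton, insert_eq_of_mem he]
    exact hC.prop
  exact (hind.insert_dep_iff.mp this).1

/-- A circuit and a cocircuit cannot intersect in exactly one element. -/
lemma circuit_cocircuit_inter (hC : Minimal M.Dep C) (hD : Minimal M✶.Dep D)
    (h : C ∩ D = {e}) : False := by
  have heC : e ∈ C := (h.symm ▸ rfl : e ∈ C ∩ D).1
  have heD : e ∈ D := (h.symm ▸ rfl : e ∈ C ∩ D).2
  have hDE : D ⊆ M.E := hD.prop.subset_ground
  have hCE : C ⊆ M.E := hC.prop.subset_ground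
  have hC' : C \ {e} ⊆ M.E \ D := by
    rintro x ⟨hxC, hxe⟩
    refine ⟨hCE hxC, fun hxD => hxe ?_⟩
    have : x ∈ C ∩ D := ⟨hxC, hxD⟩
    rw [h] at this; exact this
  obtain ⟨B₀, hB₀⟩ := M.exists_isBasis (M.E \ D) diff_subset
  have he0 : e ∈ M.closure B₀ := by
    rw [hB₀.closure_eq_closure]
    exact M.closure_subset_closure hC' (min_dep_mem_closure hC heC)
  -- D \ {e} is coindependent, so its complement is spanning
  have hco : M.Coindep (D \ {e}) := min_dep_diff_indep hD heD
  have hsp := hco.compl_spanning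
  have hcompl : M.E \ (D \ {e}) = insert e (M.E \ D) := by
    ext x
    simp only [mem_diff, mem_singleton_iff, mem_insert_iff, not_and, not_not]
    constructor
    · rintro ⟨hxE, hx⟩
      by_cases hxD : x ∈ D
      · exact Or.inl (hx hxD)
      · exact Or.inr ⟨hxE, hxD⟩
    · rintro (rfl | ⟨hxE, hxD⟩)
      · exact ⟨hDE heD, fun _ => rfl⟩
      · exact ⟨hxE, fun h => absurd h hxD⟩
  have hclE : M.closure (M.E \ D) = M.E := by
    have h1 : M.closure (insert e (M.E \ D)) = M.closure (M.E \ D) := by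
      rw [← M.closure_insert_closure_eq_closure_insert, ← hB₀.closure_eq_closure,
        M.closure_insert_closure_eq_closure_insert,
        Matroid.closure_insert_eq_of_mem_closure he0, hB₀.closure_eq_closure]
    rw [← h1, ← hcompl]
    exact hsp.closure_eq
  have hB₀base : M.IsBase B₀ :=
    hB₀.indep.isBase_of_ground_subset_closure (by rw [hB₀.closure_eq_closure, hclE])
  have hmeets := (Matroid.dual_dep_iff_forall.mp hD.prop).1 B₀ hB₀base
  obtain ⟨x, hxD, hxB⟩ := hmeets
  exact (hB₀.subset hxB).2 hxD

/-- The painting property: for any partition `P ∪ Q ∪ {e}` of the ground set, either there is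
a circuit through `e` in `P ∪ {e}` or a cocircuit through `e` in `Q ∪ {e}`. -/
lemma painting (M : Matroid α) (he : e ∈ M.E) (_hPQ : Disjoint P Q) (heP : e ∉ P) (heQ : e ∉ Q)
    (hU : P ∪ Q ∪ {e} = M.E) :
    (∃ C, Minimal M.Dep C ∧ e ∈ C ∧ C ⊆ P ∪ {e}) ∨
      (∃ D, Minimal M✶.Dep D ∧ e ∈ D ∧ D ⊆ Q ∪ {e}) := by
  have hP : P ⊆ M.E := by rw [← hU]; exact fun x hx => Or.inl (Or.inl hx)
  obtain ⟨B₀, hB₀⟩ := M.exists_isBasis P hP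
  have heB₀ : e ∉ B₀ := fun h => heP (hB₀.subset h)
  by_cases he0 : e ∈ M.closure B₀
  · obtain ⟨C, hC, heC, hCsub⟩ := exists_min_dep hB₀.indep he0 heB₀
    exact Or.inl ⟨C, hC, heC, hCsub.trans
      (by rw [union_singleton]; exact insert_subset_insert hB₀.subset)⟩
  · have hins : M.Indep (insert e B₀) :=
      (hB₀.indep.insert_indep_iff_of_notMem heB₀).mpr ⟨he, he0⟩
    obtain ⟨B, hB, hBsub⟩ := hins.exists_isBase_superset
    have heB : e ∈ B := hBsub (mem_insert _ _)
    have hB₀B : B₀ ⊆ B := (subset_insert _ _).trans hBsub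
    set J := (M.E \ B) ∩ Q with hJdef
    have hJindep : M✶.Indep J := hB.compl_isBase_dual.indep.subset inter_subset_left
    have heJ : e ∉ J := fun h => heQ h.2
    have hdep : M✶.Dep (insert e J) := by
      rw [Matroid.Dep, Matroid.dual_indep_iff_exists']
      constructor
      · rintro ⟨-, B', hB', hdisj⟩
        have heB' : e ∉ B' := fun h => hdisj.ne_of_mem (mem_insert _ _) h rfl
        obtain ⟨f, hf, hBf⟩ := hB.exchange hB' ⟨heB, heB'⟩
        have hfE : f ∈ M.E := hB'.subset_ground hf.1
        have hfe : f ≠ e := fun h => hf.2 (h ▸ heB)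
        rw [← hU] at hfE
        rcases hfE with (hfP | hfQ) | hfe'
        · have hfB₀ : f ∉ B₀ := fun h => hf.2 (hB₀B h)
          have : M.Indep (insert f B₀) := hBf.indep.subset
            (insert_subset_insert (subset_diff_singleton hB₀B heB₀))
          exact (hB₀.insert_dep ⟨hfP, hfB₀⟩).not_indep this
        · have : f ∈ J := ⟨⟨hB'.subset_ground hf.1, hf.2⟩, hfQ⟩
          exact hdisj.ne_of_mem (mem_insert_of_mem _ this) hf.1 rfl
        · exact hfe hfe'
      · rw [Matroid.dual_ground]
        exact insert_subset he (inter_subset_left.trans diff_subset)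
    have heJcl : e ∈ M✶.closure J := by
      rw [hJindep.mem_closure_iff_of_notMem heJ]
      exact hdep
    obtain ⟨D, hD, heD, hDsub⟩ := exists_min_dep hJindep heJcl heJ
    refine Or.inr ⟨D, hD, heD, hDsub.trans ?_⟩
    rw [union_singleton]
    exact insert_subset_insert inter_subset_right

end CCAux

open CCAux Set in
/-- **Theorem.** The circuit-cocircuit axiomatisation of infinite matroids. -/
theorem matroid_circuit_cocircuit_axioms {α : Type} (E : Set α) (𝒞 𝒟 : Set (Set α))
    (h𝒞 : ∀ C ∈ 𝒞, C ⊆ E) (h𝒟 : ∀ D ∈ 𝒟, D ⊆ E) :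
    (∃ M : Matroid α, M.E = E ∧ (∀ C, M.IsCircuit' C ↔ C ∈ 𝒞) ∧
        (∀ D, M.IsCocircuit' D ↔ D ∈ 𝒟)) ↔
      (∅ ∉ 𝒞 ∧
       ∅ ∉ 𝒟 ∧
       (∀ C ∈ 𝒞, ∀ C' ∈ 𝒞, C ⊆ C' → C = C') ∧
       (∀ D ∈ 𝒟, ∀ D' ∈ 𝒟, D ⊆ D' → D = D') ∧
       (∀ C ∈ 𝒞, ∀ D ∈ 𝒟, ¬ ∃ e, C ∩ D = {e}) ∧
       (∀ e ∈ E, ∀ P Q : Set α, Disjoint P Q → e ∉ P → e ∉ Q → P ∪ Q ∪ {e} = E →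
         (∃ C ∈ 𝒞, e ∈ C ∧ C ⊆ P ∪ {e}) ∨ (∃ D ∈ 𝒟, e ∈ D ∧ D ⊆ Q ∪ {e})) ∧
       (∀ I X : Set α, (¬ ∃ C ∈ 𝒞, C ⊆ I) → I ⊆ X → X ⊆ E →
         ∃ J, Maximal (fun J : Set α => (¬ ∃ C ∈ 𝒞, C ⊆ J) ∧ I ⊆ J ∧ J ⊆ X) J)) := by
  constructor
  · -- Forward direction
    rintro ⟨M, rfl, hCirc, hCocirc⟩
    have hcirc' : ∀ C, Minimal M.Dep C ↔ C ∈ 𝒞 := hCirc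
    have hcocirc' : ∀ D, Minimal M✶.Dep D ↔ D ∈ 𝒟 := hCocirc
    refine ⟨?_, ?_, ?_, ?_, ?_, ?_, ?_⟩
    · exact fun h => ((hcirc' ∅).mpr h).1.not_indep M.empty_indep
    · exact fun h => ((hcocirc' ∅).mpr h).1.not_indep M✶.empty_indep
    · intro C hC C' hC' hCC'
      exact hCC'.antisymm (((hcirc' C').mpr hC').2 ((hcirc' C).mpr hC).1 hCC')
    · intro D hD D' hD' hDD'
      exact hDD'.antisymm (((hcocirc' D').mpr hD').2 ((hcocirc' D).mpr hD).1 hDD')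
    · rintro C hC D hD ⟨e, h⟩
      exact circuit_cocircuit_inter ((hcirc' C).mpr hC) ((hcocirc' D).mpr hD) h
    · intro e he P Q hPQ heP heQ hU
      rcases painting M he hPQ heP heQ hU with ⟨C, hC, h1, h2⟩ | ⟨D, hD, h1, h2⟩
      · exact Or.inl ⟨C, (hcirc' C).mp hC, h1, h2⟩
      · exact Or.inr ⟨D, (hcocirc' D).mp hD, h1, h2⟩
    · intro I X hInoC hIX hXE
      have hIind : M.Indep I := by
        by_contra h
        obtain ⟨C, hC, hCI⟩ := dep_contains_min_dep ⟨h, hIX.trans hXE⟩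
        exact hInoC ⟨C, (hcirc' C).mp hC, hCI⟩
      obtain ⟨J, hIJ, hJmax⟩ := M.existsMaximalSubsetProperty_indep X hXE I hIind hIX
      refine ⟨J, ⟨?_, hIJ, hJmax.prop.2⟩, ?_⟩
      · rintro ⟨C, hC𝒞, hCJ⟩
        exact ((hcirc' C).mpr hC𝒞).1.not_indep (hJmax.prop.1.subset hCJ)
      · rintro K ⟨hKnoC, hIK, hKX⟩ hJK
        refine hJmax.2 ⟨?_, hKX⟩ hJK
        by_contra h
        obtain ⟨C, hC, hCK⟩ := dep_contains_min_dep ⟨h, hKX.trans hXE⟩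
        exact hKnoC ⟨C, (hcirc' C).mp hC, hCK⟩
  · -- Backward direction
    rintro ⟨h1, h1d, h2, h2d, hO1, hO2, hIM⟩
    classical
    set Ind : Set α → Prop := fun I => I ⊆ E ∧ ∀ C ∈ 𝒞, ¬ C ⊆ I with hInddef
    have hIM' : ∀ I X, (∀ C ∈ 𝒞, ¬ C ⊆ I) → I ⊆ X → X ⊆ E →
        ∃ J, Maximal (fun J => (∀ C ∈ 𝒞, ¬ C ⊆ J) ∧ I ⊆ J ∧ J ⊆ X) J := by
      intro I X h hIX hXE
      obtain ⟨J, hJ⟩ := hIM I X (by push_neg; exact h) hIX hXE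
      have hJ1 : ∀ C ∈ 𝒞, ¬ C ⊆ J := by have := hJ.prop.1; push_neg at this; exact this
      exact ⟨J, ⟨hJ1, hJ.prop.2⟩, fun K hK hJK =>
        hJ.2 ⟨by push_neg; exact hK.1, hK.2⟩ hJK⟩
    have O1app : ∀ C ∈ 𝒞, ∀ D ∈ 𝒟, ∀ J : Set α, ∀ w, C ⊆ insert w J → Disjoint D J →
        w ∈ C → w ∈ D → False := by
      intro C hC D hD J w hCsub hdisj hwC hwD
      refine hO1 C hC D hD ⟨w, Subset.antisymm ?_ (singleton_subset_iff.mpr ⟨hwC, hwD⟩)⟩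
      rintro x ⟨hxC, hxD⟩
      rcases mem_insert_iff.mp (hCsub hxC) with rfl | hxJ
      · rfl
      · exact absurd rfl (hdisj.ne_of_mem hxD hxJ)
    have circthru : ∀ J f, (∀ C ∈ 𝒞, ¬ C ⊆ J) → ¬ (∀ C ∈ 𝒞, ¬ C ⊆ insert f J) →
        ∃ C ∈ 𝒞, f ∈ C ∧ C ⊆ insert f J := by
      intro J f hJ hno
      push_neg at hno
      obtain ⟨C, hC, hCsub⟩ := hno
      refine ⟨C, hC, ?_, hCsub⟩
      by_contra hfC
      exact hJ C hC fun x hx =>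
        (mem_insert_iff.mp (hCsub hx)).resolve_left fun h => hfC (h ▸ hx)
    have fund : ∀ B, Maximal Ind B → ∀ e, e ∈ E → e ∉ B →
        ∃ C ∈ 𝒞, e ∈ C ∧ C ⊆ insert e B := by
      intro B hB e heE heB
      refine circthru B e hB.prop.2 ?_
      intro hno
      exact heB (hB.2 ⟨insert_subset heE hB.prop.1, hno⟩ (subset_insert _ _) (mem_insert _ _))
    have meet : ∀ B, Maximal Ind B → ∀ D ∈ 𝒟, ¬ Disjoint D B := by
      intro B hB D hD hdisj
      obtain ⟨e, heD⟩ : D.Nonempty := nonempty_iff_ne_empty.mpr fun h => h1d (h ▸ hD)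
      have heB : e ∉ B := fun h => absurd rfl (hdisj.ne_of_mem heD h)
      obtain ⟨C, hC, heC, hCsub⟩ := fund B hB e (h𝒟 D hD heD) heB
      exact O1app C hC D hD B e hCsub hdisj heC heD
    have step : ∀ J : Set α, ∀ z, (∀ C ∈ 𝒞, ¬ C ⊆ insert z J) → J ⊆ E → z ∈ E → z ∉ J →
        ∃ D₀ ∈ 𝒟, z ∈ D₀ ∧ Disjoint D₀ J := by
      intro J z hno hJE hzE hzJ
      have hdisj : Disjoint J ((E \ J) \ {z}) :=
        disjoint_left.mpr fun x hx h => h.1.2 hx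
      have hzQ : z ∉ (E \ J) \ {z} := fun h => h.2 rfl
      have hunion : J ∪ ((E \ J) \ {z}) ∪ {z} = E := by
        ext x
        constructor
        · rintro ((h | h) | h)
          · exact hJE h
          · exact h.1.1
          · exact (mem_singleton_iff.mp h) ▸ hzE
        · intro hxE
          by_cases hxJ : x ∈ J
          · exact Or.inl (Or.inl hxJ)
          by_cases hxz : x = z
          · exact Or.inr (hxz ▸ rfl)
          · exact Or.inl (Or.inr ⟨⟨hxE, hxJ⟩, hxz⟩)
      rcases hO2 z hzE J ((E \ J) \ {z}) hdisj hzJ hzQ hunion with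
        ⟨C, hC, hzC, hCsub⟩ | ⟨D₀, hD₀, hzD₀, hD₀sub⟩
      · exact absurd (by rwa [union_singleton] at hCsub) (hno C hC)
      · refine ⟨D₀, hD₀, hzD₀, disjoint_left.mpr fun x hxD₀ hxJ => ?_⟩
        rcases mem_union _ _ _ |>.mp (hD₀sub hxD₀) with h | h
        · exact h.1.2 hxJ
        · exact hzJ ((mem_singleton_iff.mp h) ▸ hxJ)
    -- the independence axioms
    have indep_empty : Ind ∅ :=
      ⟨empty_subset E, fun C hC hC0 => h1 ((subset_empty_iff.mp hC0) ▸ hC)⟩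
    have indep_subset : ∀ ⦃I J : Set α⦄, Ind J → I ⊆ J → Ind I := fun I J hJ hIJ =>
      ⟨hIJ.trans hJ.1, fun C hC hCI => hJ.2 C hC (hCI.trans hIJ)⟩
    have indep_aug : ∀ ⦃I B⦄, Ind I → ¬ Maximal Ind I → Maximal Ind B →
        ∃ x ∈ B \ I, Ind (insert x I) := by
      intro I B hI hInmax hB
      by_contra hcon
      push_neg at hcon
      obtain ⟨J, hJ⟩ := hIM' I (I ∪ B) hI.2 subset_union_left (union_subset hI.1 hB.prop.1)
      have hJI : J = I := by
        refine Subset.antisymm ?_ hJ.prop.2.1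
        intro x hxJ
        by_contra hxI
        have hxB : x ∈ B := (hJ.prop.2.2 hxJ).resolve_left hxI
        refine hcon x ⟨hxB, hxI⟩ ⟨insert_subset (hB.prop.1 hxB) hI.1, ?_⟩
        exact fun C hC hCsub => hJ.prop.1 C hC
          (hCsub.trans (insert_subset hxJ hJ.prop.2.1))
      obtain ⟨K, hIK, hK⟩ := (not_maximal_subset_iff hI).mp hInmax
      obtain ⟨z, hzK, hzI⟩ := exists_of_ssubset hIK
      have hzind : Ind (insert z I) := indep_subset hK (insert_subset hzK hIK.subset)
      have hzE : z ∈ E := hK.1 hzK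
      have hzB : z ∉ B := by
        intro hzB
        have : insert z I ⊆ J :=
          hJ.2 ⟨hzind.2, subset_insert _ _,
            insert_subset (Or.inr hzB) subset_union_left⟩ (hJI ▸ subset_insert _ _)
        exact hzI (hJI ▸ this (mem_insert _ _))
      obtain ⟨D, hD, hzD, hDdisj⟩ := step I z hzind.2 hI.1 hzE hzI
      obtain ⟨w, hwD, hwB⟩ := not_disjoint_iff.mp (meet B hB D hD)
      have hwI : w ∉ I := fun h => absurd rfl (hDdisj.ne_of_mem hwD h)
      obtain ⟨C, hC, hwC, hCsub⟩ :=
        circthru I w hI.2 fun hno => hcon w ⟨hwB, hwI⟩ ⟨insert_subset (hB.prop.1 hwB) hI.1, hno⟩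
      exact O1app C hC D hD I w hCsub hDdisj hwC hwD
    have indep_maximal : ∀ X, X ⊆ E → Matroid.ExistsMaximalSubsetProperty Ind X := by
      intro X hXE I hI hIX
      obtain ⟨J, hJ⟩ := hIM' I X hI.2 hIX hXE
      refine ⟨J, hJ.prop.2.1, ⟨⟨hJ.prop.2.2.trans hXE, hJ.prop.1⟩, hJ.prop.2.2⟩, ?_⟩
      intro K hK hJK
      exact hJ.2 ⟨hK.1.2, hJ.prop.2.1.trans hJK, hK.2⟩ hJK
    set M' : IndepMatroid α :=
      ⟨E, Ind, indep_empty, indep_subset, indep_aug, indep_maximal, fun I hI => hI.1⟩ with hM'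
    set M : Matroid α := M'.matroid with hM
    have hMInd : ∀ I, M.Indep I ↔ Ind I := fun I => IndepMatroid.matroid_indep_iff
    have hIndeq : M.Indep = Ind := funext fun I => propext (hMInd I)
    have hME : M.E = E := rfl
    have hMBase : ∀ B, M.IsBase B ↔ Maximal Ind B := by
      intro B
      rw [Matroid.isBase_iff_maximal_indep, hIndeq]
    have hMdep : ∀ D', M.Dep D' ↔ (D' ⊆ E ∧ ∃ C ∈ 𝒞, C ⊆ D') := by
      intro D'
      rw [Matroid.dep_iff, hIndeq, hME]
      constructor
      · rintro ⟨hnind, hDE⟩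
        refine ⟨hDE, ?_⟩
        by_contra h
        push_neg at h
        exact hnind ⟨hDE, h⟩
      · rintro ⟨hDE, C, hC, hCD⟩
        exact ⟨fun hind => hind.2 C hC hCD, hDE⟩
    have codep_of_mem : ∀ D ∈ 𝒟, M✶.Dep D := by
      intro D hD
      rw [Matroid.dep_iff, Matroid.dual_indep_iff_exists', Matroid.dual_ground, hME]
      refine ⟨?_, h𝒟 D hD⟩
      rintro ⟨-, B, hB, hdisj⟩
      exact meet B ((hMBase B).mp hB) D hD hdisj
    refine ⟨M, hME, ?_, ?_⟩
    · -- circuits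
      intro C
      show Minimal M.Dep C ↔ C ∈ 𝒞
      constructor
      · rintro ⟨hdep, hmin⟩
        obtain ⟨hCE, C', hC', hC'C⟩ := (hMdep C).mp hdep
        have hCC' : C ⊆ C' :=
          hmin ((hMdep C').mpr ⟨h𝒞 C' hC', C', hC', Subset.rfl⟩) hC'C
        rwa [hCC'.antisymm hC'C]
      · intro hC
        refine ⟨(hMdep C).mpr ⟨h𝒞 C hC, C, hC, Subset.rfl⟩, ?_⟩
        intro D hD hDC
        obtain ⟨hDE, C'', hC'', hC''D⟩ := (hMdep D).mp hD
        exact (h2 C'' hC'' C hC (hC''D.trans hDC)) ▸ hC''D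
    · -- cocircuits
      intro D
      show Minimal M✶.Dep D ↔ D ∈ 𝒟
      constructor
      · rintro ⟨hdep, hmin⟩
        have hDE : D ⊆ E := hdep.subset_ground
        obtain ⟨J, hJ⟩ := hIM' ∅ (E \ D)
          (fun C hC h => h1 ((subset_empty_iff.mp h) ▸ hC)) (empty_subset _) diff_subset
        have hJInd : Ind J := ⟨hJ.prop.2.2.trans diff_subset, hJ.prop.1⟩
        have hJnotmax : ¬ Maximal Ind J := by
          intro hJmax
          refine hdep.not_indep ?_
          rw [Matroid.dual_indep_iff_exists']
          exact ⟨hDE, J, (hMBase J).mpr hJmax,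
            disjoint_left.mpr fun x hxD hxJ => (hJ.prop.2.2 hxJ).2 hxD⟩
        obtain ⟨K, hJK, hK⟩ := (not_maximal_subset_iff hJInd).mp hJnotmax
        obtain ⟨z, hzK, hzJ⟩ := exists_of_ssubset hJK
        have hzind : Ind (insert z J) := indep_subset hK (insert_subset hzK hJK.subset)
        have hzE : z ∈ E := hK.1 hzK
        have hzD : z ∈ D := by
          by_contra hzD
          have : insert z J ⊆ J :=
            hJ.2 ⟨hzind.2, empty_subset _, insert_subset ⟨hzE, hzD⟩ hJ.prop.2.2⟩
              (subset_insert _ _)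
          exact hzJ (this (mem_insert _ _))
        obtain ⟨D₀, hD₀, hzD₀, hD₀disj⟩ := step J z hzind.2 hJInd.1 hzE hzJ
        have hD₀D : D₀ ⊆ D := by
          intro f hfD₀
          by_contra hfD
          have hfE : f ∈ E := h𝒟 D₀ hD₀ hfD₀
          have hfJ : f ∉ J := fun h => absurd rfl (hD₀disj.ne_of_mem hfD₀ h)
          have hno : ¬ (∀ C ∈ 𝒞, ¬ C ⊆ insert f J) := by
            intro hno
            have : insert f J ⊆ J :=
              hJ.2 ⟨hno, empty_subset _, insert_subset ⟨hfE, hfD⟩ hJ.prop.2.2⟩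
                (subset_insert _ _)
            exact hfJ (this (mem_insert _ _))
          obtain ⟨C, hC, hfC, hCsub⟩ := circthru J f hJInd.2 hno
          exact O1app C hC D₀ hD₀ J f hCsub hD₀disj hfC hfD₀
        have : D ⊆ D₀ := hmin (codep_of_mem D₀ hD₀) hD₀D
        rwa [this.antisymm hD₀D]
      · intro hD
        refine ⟨codep_of_mem D hD, ?_⟩
        intro D' hD' hD'D
        by_contra hDD'
        obtain ⟨d, hdD, hdD'⟩ := not_subset.mp hDD'
        -- D \ {d} is coindependent
        have hdE : d ∈ E := h𝒟 D hD hdD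
        have hdind : ∀ C ∈ 𝒞, ¬ C ⊆ {d} := by
          intro C hC hCsub
          rcases subset_singleton_iff_eq.mp hCsub with rfl | rfl
          · exact h1 hC
          · exact hO1 {d} hC D hD ⟨d, inter_eq_self_of_subset_left (singleton_subset_iff.mpr hdD)⟩
        obtain ⟨J, hJ⟩ := hIM' {d} ((E \ D) ∪ {d}) hdind subset_union_right
          (union_subset diff_subset (singleton_subset_iff.mpr hdE))
        have hJE : J ⊆ E := hJ.prop.2.2.trans
          (union_subset diff_subset (singleton_subset_iff.mpr hdE))
        have hJInd : Ind J := ⟨hJE, hJ.prop.1⟩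
        have hJmax : Maximal Ind J := by
          refine ⟨hJInd, ?_⟩
          intro K hK hJK
          by_contra hKJ
          obtain ⟨z, hzK, hzJ⟩ := not_subset.mp hKJ
          have hzind : Ind (insert z J) := indep_subset hK (insert_subset hzK hJK)
          have hzE : z ∈ E := hK.1 hzK
          have hzX : z ∉ (E \ D) ∪ {d} := by
            intro hzX
            have : insert z J ⊆ J :=
              hJ.2 ⟨hzind.2, hJ.prop.2.1.trans (subset_insert _ _),
                insert_subset hzX hJ.prop.2.2⟩ (subset_insert _ _)
            exact hzJ (this (mem_insert _ _))
          have hzD : z ∈ D := by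
            by_contra hzD
            exact hzX (Or.inl ⟨hzE, hzD⟩)
          obtain ⟨D₀, hD₀, hzD₀, hD₀disj⟩ := step J z hzind.2 hJE hzE hzJ
          have hdD₀ : d ∉ D₀ := fun h =>
            absurd rfl (hD₀disj.ne_of_mem h (hJ.prop.2.1 rfl))
          have hD₀D : ¬ D₀ ⊆ D := fun h => hdD₀ ((h2d D₀ hD₀ D hD h) ▸ hdD)
          obtain ⟨f, hfD₀, hfD⟩ := not_subset.mp hD₀D
          have hfE : f ∈ E := h𝒟 D₀ hD₀ hfD₀
          have hfJ : f ∉ J := fun h => absurd rfl (hD₀disj.ne_of_mem hfD₀ h)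
          have hno : ¬ (∀ C ∈ 𝒞, ¬ C ⊆ insert f J) := by
            intro hno
            have : insert f J ⊆ J :=
              hJ.2 ⟨hno, hJ.prop.2.1.trans (subset_insert _ _),
                insert_subset (Or.inl ⟨hfE, hfD⟩) hJ.prop.2.2⟩ (subset_insert _ _)
            exact hfJ (this (mem_insert _ _))
          obtain ⟨C, hC, hfC, hCsub⟩ := circthru J f hJInd.2 hno
          exact O1app C hC D₀ hD₀ J f hCsub hD₀disj hfC hfD₀
        have hcoind : M✶.Indep (D \ {d}) := by
          rw [Matroid.dual_indep_iff_exists']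
          refine ⟨Matroid.dual_ground (M := M) ▸ (diff_subset.trans (h𝒟 D hD)), J,
            (hMBase J).mpr hJmax, disjoint_left.mpr fun x hx hxJ => ?_⟩
          rcases mem_union _ _ _ |>.mp (hJ.prop.2.2 hxJ) with h | h
          · exact h.2 hx.1
          · exact hx.2 h
        exact hD'.not_indep (hcoind.subset (subset_diff_singleton hD'D hdD'))
end

section
/- Let G be a simple graph and let F be an edge set that meets every finitely coverable cut evenly and such that for every finite vertex set W only finitely many components of G − W contain an endvertex of an edge of F. Let b be a cut of G such that F ∩ b is not finite of even cardinality. Then there is an end of G that lies in the closure of F and in the closure of b. -/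
open SimpleGraph

variable {V : Type}

/-- `c` is a cut of `G`: the set of edges with one endvertex in `A` and the other outside `A`,
for some set of vertices `A`. -/
def IsCut (G : SimpleGraph V) (c : Set (Sym2 V)) : Prop :=
  ∃ A : Set V, c = {e | e ∈ G.edgeSet ∧ ∃ x y, e = s(x, y) ∧ x ∈ A ∧ y ∉ A}

/-- A set of edges is finitely coverable if some finite vertex set meets all its edges. -/
def FinitelyCoverable (c : Set (Sym2 V)) : Prop :=
  ∃ S : Set V, S.Finite ∧ ∀ e ∈ c, ∃ v ∈ S, v ∈ e

/-- `F` meets `X` evenly: their intersection is finite of even cardinality. -/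
def MeetsEvenly (F X : Set (Sym2 V)) : Prop :=
  (F ∩ X).Finite ∧ Even (F ∩ X).ncard

/-- The edge `e` lies in the connected component `C` of `H`:
both endvertices of `e` belong to `C`. -/
def EdgeInComp (H : SimpleGraph V) (C : H.ConnectedComponent) (e : Sym2 V) : Prop :=
  ∀ v ∈ e, H.connectedComponentMk v = C

/-- `F` is geometrically connected in `G`: `F` meets every finitely coverable cut `b`
such that two distinct components of `G` minus (the edges of) `b` contain edges of `F`. -/
def GeomConnected (G : SimpleGraph V) (F : Set (Sym2 V)) : Prop :=
  ∀ b : Set (Sym2 V), IsCut G b → FinitelyCoverable b →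
    (∃ C D : (G.deleteEdges b).ConnectedComponent, C ≠ D ∧
      (∃ e ∈ F, EdgeInComp (G.deleteEdges b) C e) ∧
      (∃ f ∈ F, EdgeInComp (G.deleteEdges b) D f)) →
    (F ∩ b).Nonempty

/-- The vertex set (in `V`) of a connected component of an induced subgraph. -/
def compSet (G : SimpleGraph V) {A : Set V} (C : (G.induce A).ConnectedComponent) : Set V :=
  Subtype.val '' C.supp

/-- The set of ends of `G`: compatible choices of a connected component of `G - S`
for every finite vertex set `S`. -/
def EndsOf (G : SimpleGraph V) :
    Set (∀ S : Finset V, (G.induce ((↑S : Set V)ᶜ)).ConnectedComponent) :=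
  {ω | ∀ ⦃S S' : Finset V⦄, S ⊆ S' → compSet G (ω S') ⊆ compSet G (ω S)}

/-- An end of `G`. As a subspace of the product of the (discrete) sets of components,
this also carries the topology of the end space. -/
abbrev GraphEnd (G : SimpleGraph V) := ↥(EndsOf G)

/-- The end `ω` lies in the closure of the edge set `F`: for every finite vertex set `S`
some edge of `F` has an endvertex in `ω(S)`. -/
def EndInClosure (G : SimpleGraph V) (ω : GraphEnd G) (F : Set (Sym2 V)) : Prop :=
  ∀ S : Finset V, ∃ e ∈ F, ∃ v ∈ e, v ∈ compSet G (ω.1 S)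

/-- The vertex `v` dominates the end `ω`: for every finite vertex set `S` not containing `v`,
`v` has a neighbour in `ω(S)`. -/
def Dominates (G : SimpleGraph V) (v : V) (ω : GraphEnd G) : Prop :=
  ∀ S : Finset V, v ∉ S → ∃ w, G.Adj v w ∧ w ∈ compSet G (ω.1 S)

/-- The sets of connected components carry the discrete topology; the end space is then
a subspace of the product of these discrete spaces. -/
instance (priority := 100) {α : Type} (H : SimpleGraph α) :
    TopologicalSpace H.ConnectedComponent := ⊥

/-! ### Auxiliary definitions and lemmas -/

/-- The cut determined by the vertex set `X`. -/
def cutOf (G : SimpleGraph V) (X : Set V) : Set (Sym2 V) :=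
  {e | e ∈ G.edgeSet ∧ ∃ x y, e = s(x, y) ∧ x ∈ X ∧ y ∉ X}

lemma isCut_cutOf (G : SimpleGraph V) (X : Set V) : IsCut G (cutOf G X) := ⟨X, rfl⟩

lemma mem_cutOf {G : SimpleGraph V} {X : Set V} {x y : V} (h : G.Adj x y) :
    s(x,y) ∈ cutOf G X ↔ ((x ∈ X ∧ y ∉ X) ∨ (y ∈ X ∧ x ∉ X)) := by
  constructor
  · rintro ⟨-, a, c, hac, ha, hc⟩
    rcases Sym2.eq_iff.mp hac with ⟨rfl, rfl⟩ | ⟨rfl, rfl⟩ <;> tauto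
  · rintro (⟨hx, hy⟩ | ⟨hy, hx⟩)
    · exact ⟨h, x, y, rfl, hx, hy⟩
    · exact ⟨h, y, x, Sym2.eq_swap, hy, hx⟩

lemma mem_compSet {G : SimpleGraph V} {A : Set V} {C : (G.induce A).ConnectedComponent} {v : V} :
    v ∈ compSet G C ↔ ∃ h : v ∈ A, (G.induce A).connectedComponentMk ⟨v, h⟩ = C := by
  simp only [compSet, Set.mem_image, ConnectedComponent.mem_supp_iff]
  constructor
  · rintro ⟨⟨w, hw⟩, h1, rfl⟩; exact ⟨hw, h1⟩
  · rintro ⟨h, h1⟩; exact ⟨⟨v, h⟩, h1, rfl⟩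

lemma adj_mem_compSet {G : SimpleGraph V} {A : Set V} {C : (G.induce A).ConnectedComponent}
    {x y : V} (hx : x ∈ compSet G C) (hyA : y ∈ A) (hadj : G.Adj x y) :
    y ∈ compSet G C := by
  rw [mem_compSet] at hx ⊢
  obtain ⟨hxA, rfl⟩ := hx
  refine ⟨hyA, ConnectedComponent.sound ?_⟩
  exact (Adj.reachable (by simpa using hadj.symm))

lemma compSet_eq_of_mem {G : SimpleGraph V} {A : Set V}
    {C D : (G.induce A).ConnectedComponent} {v : V}
    (hC : v ∈ compSet G C) (hD : v ∈ compSet G D) : C = D := by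
  rw [mem_compSet] at hC hD
  obtain ⟨h, rfl⟩ := hC; obtain ⟨h', rfl⟩ := hD; rfl

lemma finEven_of_symmDiff {α : Type} {s t : Set α} (hd : (symmDiff s t).Finite)
    (hde : Even (symmDiff s t).ncard) (ht : t.Finite) (hte : Even t.ncard) :
    s.Finite ∧ Even s.ncard := by
  have hsub : s ⊆ (symmDiff s t) ∪ t := by
    intro x hx
    by_cases h : x ∈ t
    · exact Or.inr h
    · exact Or.inl (Set.mem_symmDiff.mpr (Or.inl ⟨hx, h⟩))
  have hsfin : s.Finite := (hd.union ht).subset hsub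
  have key : (s ∩ t).ncard + (s \ t).ncard = s.ncard :=
    Set.ncard_inter_add_ncard_diff_eq_ncard s t hsfin
  have key2 : (t ∩ s).ncard + (t \ s).ncard = t.ncard :=
    Set.ncard_inter_add_ncard_diff_eq_ncard t s ht
  have key3 : (symmDiff s t).ncard = (s \ t).ncard + (t \ s).ncard := by
    rw [Set.symmDiff_def]
    exact Set.ncard_union_eq disjoint_sdiff_sdiff hsfin.diff ht.diff
  have hcomm : (t ∩ s).ncard = (s ∩ t).ncard := by rw [Set.inter_comm]
  refine ⟨hsfin, ?_⟩
  rw [Nat.even_iff] at hde hte ⊢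
  omega

lemma finEven_biUnion {ι α : Type} (K : Finset ι) (f : ι → Set α)
    (hdisj : ∀ i ∈ K, ∀ j ∈ K, i ≠ j → Disjoint (f i) (f j))
    (h : ∀ i ∈ K, (f i).Finite ∧ Even (f i).ncard) :
    (⋃ i ∈ K, f i).Finite ∧ Even (⋃ i ∈ K, f i).ncard := by
  classical
  induction K using Finset.induction_on with
  | empty => simp
  | @insert a K' ha ih =>
    rw [Finset.set_biUnion_insert]
    have hdisj' : Disjoint (f a) (⋃ i ∈ K', f i) := by
      rw [Set.disjoint_left]
      intro x hxa hx
      obtain ⟨i, hi, hxi⟩ := Set.mem_iUnion₂.mp hx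
      exact (Set.disjoint_left.mp
        (hdisj a (K'.mem_insert_self a) i (Finset.mem_insert_of_mem hi)
          (fun he => ha (he ▸ hi))) hxa) hxi
    have ihh := ih (fun i hi j hj hij => hdisj i (Finset.mem_insert_of_mem hi) j
        (Finset.mem_insert_of_mem hj) hij)
      (fun i hi => h i (Finset.mem_insert_of_mem hi))
    have ha' := h a (K'.mem_insert_self a)
    refine ⟨ha'.1.union ihh.1, ?_⟩
    rw [Set.ncard_union_eq hdisj' ha'.1 ihh.1]
    exact ha'.2.add ihh.2

/-- The component of `G - S` containing a given component of `G - S'`, for `S ⊆ S'`. -/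
def projComp (G : SimpleGraph V) {S S' : Finset V} (h : S ⊆ S')
    (C : (G.induce ((↑S' : Set V)ᶜ)).ConnectedComponent) :
    (G.induce ((↑S : Set V)ᶜ)).ConnectedComponent :=
  C.map (G.induceHomOfLE (by intro v hv hvS; exact hv (Finset.coe_subset.mpr h hvS))).toHom

lemma compSet_projComp_subset {G : SimpleGraph V} {S S' : Finset V} (h : S ⊆ S')
    (C : (G.induce ((↑S' : Set V)ᶜ)).ConnectedComponent) :
    compSet G C ⊆ compSet G (projComp G h C) := by
  intro v hv
  rw [mem_compSet] at hv ⊢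
  obtain ⟨hv1, rfl⟩ := hv
  exact ⟨by intro hvS; exact hv1 (Finset.coe_subset.mpr h hvS), rfl⟩

/-- **Lemma (jumping arc).** If F meets every finitely coverable cut evenly, only finitely
many components of G − W meet V(F) for each finite W, and b is a cut not meeting F
evenly, then some end lies in the closure of both F and b. -/
theorem end_in_closure_of_cut_and_F (G : SimpleGraph V) (F : Set (Sym2 V))
    (hF : F ⊆ G.edgeSet)
    (heven : ∀ c, IsCut G c → FinitelyCoverable c → MeetsEvenly F c)
    (hfin : ∀ W : Finset V,
      {C : (G.induce ((↑W : Set V)ᶜ)).ConnectedComponent |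
        ∃ e ∈ F, ∃ v ∈ e, v ∈ compSet G C}.Finite)
    (b : Set (Sym2 V)) (hb : IsCut G b)
    (hodd : ¬ MeetsEvenly F b) :
    ∃ ω : GraphEnd G, EndInClosure G ω F ∧ EndInClosure G ω b := by
  classical
  obtain ⟨A, rfl⟩ := hb
  -- rename the cut
  have hbc : {e | e ∈ G.edgeSet ∧ ∃ x y, e = s(x, y) ∧ x ∈ A ∧ y ∉ A} = cutOf G A := rfl
  rw [hbc] at hodd ⊢
  -- Step 1: for every finite S there is a "good" component
  have key : ∀ S : Finset V, ∃ C : (G.induce ((↑S : Set V)ᶜ)).ConnectedComponent,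
      ¬ ((F ∩ cutOf G ((A \ ↑S) ∩ compSet G C)).Finite ∧
        Even (F ∩ cutOf G ((A \ ↑S) ∩ compSet G C)).ncard) := by
    intro S
    by_contra hcon
    push_neg at hcon
    -- hcon : ∀ C, (F ∩ cutOf ...).Finite ∧ Even ...
    set A' : Set V := A \ ↑S with hA'
    set K : Finset _ := (hfin S).toFinset with hK
    -- decomposition of F ∩ cutOf G A' over components
    have hunion : F ∩ cutOf G A' = ⋃ C ∈ K, F ∩ cutOf G (A' ∩ compSet G C) := by
      ext e
      simp only [Set.mem_iUnion, Set.Finite.mem_toFinset, exists_prop, Set.mem_inter_iff, hK,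
        Set.mem_setOf_eq]
      constructor
      · rintro ⟨heF, he, x, y, rfl, hx, hy⟩
        have hadj : G.Adj x y := he
        have hxS : x ∈ ((↑S : Set V)ᶜ) := fun hmem => hx.2 hmem
        refine ⟨(G.induce ((↑S : Set V)ᶜ)).connectedComponentMk ⟨x, hxS⟩,
          ⟨s(x,y), heF, x, Sym2.mem_mk_left x y, mem_compSet.mpr ⟨hxS, rfl⟩⟩,
          heF, he, x, y, rfl, ⟨hx, mem_compSet.mpr ⟨hxS, rfl⟩⟩, ?_⟩
        rintro ⟨hyA', -⟩
        exact hy hyA'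
      · rintro ⟨C, -, heF, he, x, y, rfl, ⟨hxA, hxC⟩, hy⟩
        have hadj : G.Adj x y := he
        refine ⟨heF, he, x, y, rfl, hxA, fun hyA => hy ⟨hyA, ?_⟩⟩
        exact adj_mem_compSet hxC (fun hmem => hyA.2 hmem) hadj
    -- the pieces are pairwise disjoint
    have hdisj : ∀ C ∈ K, ∀ D ∈ K, C ≠ D →
        Disjoint (F ∩ cutOf G (A' ∩ compSet G C)) (F ∩ cutOf G (A' ∩ compSet G D)) := by
      intro C _ D _ hCD
      rw [Set.disjoint_left]
      rintro e ⟨heF, he, x, y, rfl, ⟨hxA, hxC⟩, -⟩ ⟨-, -, x', y', hxy, ⟨hx'A, hx'D⟩, -⟩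
      have hadj : G.Adj x y := he
      apply hCD
      rcases Sym2.eq_iff.mp hxy with ⟨rfl, rfl⟩ | ⟨rfl, rfl⟩
      · exact compSet_eq_of_mem hxC hx'D
      · exact compSet_eq_of_mem
          (adj_mem_compSet hxC (fun hmem => hx'A.2 hmem) hadj) hx'D
    -- hence F ∩ cutOf G A' is finite of even cardinality
    have hc2 : (F ∩ cutOf G A').Finite ∧ Even (F ∩ cutOf G A').ncard := by
      rw [hunion]
      exact finEven_biUnion K _ hdisj (fun C _ => hcon C)
    -- the cut at A ∩ S is finitely coverable, so F meets it evenly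
    have hc1 : MeetsEvenly F (cutOf G (A ∩ ↑S)) := by
      refine heven _ (isCut_cutOf G _) ⟨↑S, S.finite_toSet, ?_⟩
      rintro e ⟨-, x, y, rfl, ⟨-, hxS⟩, -⟩
      exact ⟨x, hxS, Sym2.mem_mk_left x y⟩
    -- the symmetric difference identity
    have hsd : symmDiff (F ∩ cutOf G A) (F ∩ cutOf G A') = F ∩ cutOf G (A ∩ ↑S) := by
      ext e
      by_cases heF : e ∈ F
      · have he : e ∈ G.edgeSet := hF heF
        induction e using Sym2.ind with
        | _ x y =>
          have hadj : G.Adj x y := he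
          simp only [Set.mem_symmDiff, Set.mem_inter_iff, heF, true_and,
            mem_cutOf hadj, Set.mem_inter_iff, Set.mem_diff, Finset.mem_coe]
          by_cases h1 : x ∈ A <;> by_cases h2 : y ∈ A <;>
            by_cases h3 : x ∈ S <;> by_cases h4 : y ∈ S <;>
            simp [h1, h2, h3, h4, hA', Finset.mem_coe]
      · simp [Set.mem_symmDiff, heF]
    -- transfer evenness to F ∩ b, contradiction
    apply hodd
    have := finEven_of_symmDiff (s := F ∩ cutOf G A) (t := F ∩ cutOf G A')
      (by rw [hsd]; exact hc1.1) (by rw [hsd]; exact hc1.2) hc2.1 hc2.2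
    exact ⟨this.1, this.2⟩
  -- choose a good component for each S
  choose g hg using key
  -- good components contain endvertices of F-edges
  have gF : ∀ S : Finset V, ∃ e ∈ F, ∃ v ∈ e, v ∈ compSet G (g S) := by
    intro S
    have hne : (F ∩ cutOf G ((A \ ↑S) ∩ compSet G (g S))).Nonempty := by
      rcases Set.eq_empty_or_nonempty (F ∩ cutOf G ((A \ ↑S) ∩ compSet G (g S))) with h | h
      · exact absurd ⟨by rw [h]; exact Set.finite_empty, by rw [h]; simp⟩ (hg S)
      · exact h
    obtain ⟨e, heF, -, x, y, rfl, ⟨-, hx2⟩, -⟩ := hne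
    exact ⟨s(x,y), heF, x, Sym2.mem_mk_left x y, hx2⟩
  -- good components contain endvertices of b-edges
  have gb : ∀ S : Finset V, ∃ e ∈ cutOf G A, ∃ v ∈ e, v ∈ compSet G (g S) := by
    intro S
    by_contra hno
    push_neg at hno
    apply hg S
    refine heven _ (isCut_cutOf G _) ⟨↑S, S.finite_toSet, ?_⟩
    rintro e ⟨he, x, y, rfl, ⟨⟨hxA, hxS⟩, hxC⟩, hy⟩
    have hadj : G.Adj x y := he
    by_cases hyS : y ∈ (↑S : Set V)
    · exact ⟨y, hyS, Sym2.mem_mk_right x y⟩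
    · exfalso
      have hyC : y ∈ compSet G (g S) := adj_mem_compSet hxC hyS hadj
      by_cases hyA : y ∈ A
      · exact hy ⟨⟨hyA, hyS⟩, hyC⟩
      · exact hno s(x,y) ⟨he, x, y, rfl, hxA, hyA⟩ y (Sym2.mem_mk_right x y) hyC
  -- the ultrafilter of "large" families of finite sets
  haveI : Nonempty (Finset V) := ⟨∅⟩
  haveI : (Filter.atTop : Filter (Finset V)).NeBot := Filter.atTop_neBot
  set U : Ultrafilter (Finset V) := Ultrafilter.of Filter.atTop with hUdef
  have hU : ∀ S : Finset V, Set.Ici S ∈ U :=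
    fun S => (Ultrafilter.of_le Filter.atTop) (Filter.Ici_mem_atTop S)
  -- choose the end: the component capturing good components U-often
  have hsel : ∀ S : Finset V, ∃ C : (G.induce ((↑S : Set V)ᶜ)).ConnectedComponent,
      {S' : Finset V | S ⊆ S' ∧ compSet G (g S') ⊆ compSet G C} ∈ U := by
    intro S
    have hsub : Set.Ici S ⊆ ⋃ C ∈ {C : (G.induce ((↑S : Set V)ᶜ)).ConnectedComponent |
        ∃ e ∈ F, ∃ v ∈ e, v ∈ compSet G C},
        {S' : Finset V | S ⊆ S' ∧ compSet G (g S') ⊆ compSet G C} := by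
      intro S' hS'
      have hS'' : S ⊆ S' := hS'
      obtain ⟨e, heF, v, hve, hv⟩ := gF S'
      exact Set.mem_iUnion₂.mpr ⟨projComp G hS'' (g S'),
        ⟨e, heF, v, hve, compSet_projComp_subset hS'' (g S') hv⟩,
        hS'', compSet_projComp_subset hS'' (g S')⟩
    have hmem := Filter.mem_of_superset (hU S) hsub
    obtain ⟨C, -, hC⟩ := (Ultrafilter.finite_biUnion_mem_iff (hfin S)).mp hmem
    exact ⟨C, hC⟩
  choose ω0 hω0 using hsel
  -- ω0 is an end
  have hmemEnds : ω0 ∈ EndsOf G := by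
    intro S S'' hSS
    obtain ⟨S', ⟨hS1, hg1⟩, hS2, hg2⟩ :=
      Filter.nonempty_of_mem (Filter.inter_mem (hω0 S) (hω0 S''))
    obtain ⟨e, -, v, -, hv⟩ := gF S'
    have hv1 : v ∈ compSet G (ω0 S) := hg1 hv
    have hv2 : v ∈ compSet G (projComp G hSS (ω0 S'')) :=
      compSet_projComp_subset hSS (ω0 S'') (hg2 hv)
    have heq : projComp G hSS (ω0 S'') = ω0 S := compSet_eq_of_mem hv2 hv1
    intro w hw
    rw [← heq]
    exact compSet_projComp_subset hSS (ω0 S'') hw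
  refine ⟨⟨ω0, hmemEnds⟩, ?_, ?_⟩ <;> intro S
  · obtain ⟨S', hS1, hg1⟩ := Filter.nonempty_of_mem (hω0 S)
    obtain ⟨e, heF, v, hve, hv⟩ := gF S'
    exact ⟨e, heF, v, hve, hg1 hv⟩
  · obtain ⟨S', hS1, hg1⟩ := Filter.nonempty_of_mem (hω0 S)
    obtain ⟨e, heb, v, hve, hv⟩ := gb S'
    exact ⟨e, heb, v, hve, hg1 hv⟩
end

section
/- Let G be a simple graph, r a vertex of G, and k a natural number. Then the subgraph of G induced on the ball B_k(r) of radius k around r has a spanning tree in which every two vertices are joined by a path of length at most 2k + 1. -/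
open SimpleGraph

variable {V : Type}

/-- A ray in `G`: an injective sequence of vertices in which consecutive vertices
are adjacent. -/
def IsRay (G : SimpleGraph V) (R : ℕ → V) : Prop :=
  Function.Injective R ∧ ∀ n, G.Adj (R n) (R (n + 1))

/-- The ball of radius `k` around `r`: all vertices joined to `r` by a walk
of length at most `k`. -/
def ball (G : SimpleGraph V) (r : V) (k : ℕ) : Set V :=
  {v | ∃ p : G.Walk r v, p.length ≤ k}

section Aux
variable {W : Type} (root : W) (P : W → W)

private def parentGraph (hP : ∀ a, a ≠ root → P a ≠ a) : SimpleGraph W where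
  Adj a b := (a ≠ root ∧ P a = b) ∨ (b ≠ root ∧ P b = a)
  symm := ⟨fun a b h => h.symm⟩
  loopless := ⟨fun a h => by rcases h with ⟨h1, h2⟩ | ⟨h1, h2⟩ <;> exact hP a h1 h2⟩

private lemma parentGraph_walkToRoot (hP : ∀ a, a ≠ root → P a ≠ a) (d : W → ℕ)
    (hd : ∀ a, a ≠ root → d (P a) < d a) :
    ∀ a, ∃ q : (parentGraph root P hP).Walk a root, q.length ≤ d a := by
  have main : ∀ n a, d a ≤ n → ∃ q : (parentGraph root P hP).Walk a root, q.length ≤ d a := by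
    intro n
    induction n with
    | zero =>
      intro a ha
      by_cases h : a = root
      · subst h; exact ⟨Walk.nil, by simp⟩
      · exact absurd (hd a h) (by omega)
    | succ n ih =>
      intro a ha
      by_cases h : a = root
      · subst h; exact ⟨Walk.nil, by simp⟩
      · have hlt := hd a h
        obtain ⟨q, hq⟩ := ih (P a) (by omega)
        exact ⟨Walk.cons (show (parentGraph root P hP).Adj a (P a) from Or.inl ⟨h, rfl⟩) q, by simp; omega⟩
  exact fun a => main (d a) a le_rfl

private lemma parentGraph_isAcyclic (hP : ∀ a, a ≠ root → P a ≠ a) (d : W → ℕ)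
    (hd : ∀ a, a ≠ root → d (P a) < d a) :
    (parentGraph root P hP).IsAcyclic := by
  classical
  intro v c hc
  obtain ⟨u, hus, hmax⟩ := Finset.exists_max_image c.support.toFinset d
    ⟨v, List.mem_toFinset.mpr c.start_mem_support⟩
  rw [List.mem_toFinset] at hus
  replace hmax : ∀ y ∈ c.support, d y ≤ d u := fun y hy => hmax y (List.mem_toFinset.mpr hy)
  set c' := c.rotate u hus with hc'def
  have hc' : c'.IsCycle := hc.rotate hus
  have hlen : 3 ≤ c'.length := hc'.three_le_length
  have hmax' : ∀ y ∈ c'.support, d y ≤ d u := by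
    intro y hy
    rw [Walk.support_eq_cons, List.mem_cons] at hy
    rcases hy with rfl | hy
    · exact le_rfl
    · exact hmax y (List.mem_of_mem_tail
        (((Walk.support_rotate c u hus).mem_iff).mp hy))
  have key : ∀ y, (parentGraph root P hP).Adj u y → y ∈ c'.support → u ≠ root ∧ y = P u := by
    intro y hadj hy
    change (u ≠ root ∧ P u = y) ∨ (y ≠ root ∧ P y = u) at hadj
    rcases hadj with ⟨h1, h2⟩ | ⟨h1, h2⟩
    · exact ⟨h1, h2.symm⟩
    · exfalso
      have := hd y h1
      rw [h2] at this
      exact absurd (hmax' y hy) (by omega)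
  have hnn : ¬ c'.Nil := Walk.not_nil_iff_lt_length.mpr (by omega)
  set w := c'.getVert 1 with hw
  have hadjw : (parentGraph root P hP).Adj u w := c'.adj_snd hnn
  have hws : w ∈ c'.support := Walk.mem_support_iff_exists_getVert.mpr ⟨1, rfl, by omega⟩
  obtain ⟨hur, hwP⟩ := key w hadjw hws
  set p := c'.tail with hp
  have hlenp : p.length + 1 = c'.length := Walk.length_tail_add_one hnn
  have hpnn : ¬ p.Nil := Walk.not_nil_iff_lt_length.mpr (by omega)
  set q := p.reverse with hq
  have hqnn : ¬ q.Nil := by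
    rw [Walk.not_nil_iff_lt_length, hq, Walk.length_reverse]
    rw [Walk.not_nil_iff_lt_length] at hpnn
    exact hpnn
  set x := q.getVert 1 with hx
  have hadjx : (parentGraph root P hP).Adj u x := q.adj_snd hqnn
  have hxs : x ∈ c'.support := by
    have hx1 : x ∈ q.support := Walk.mem_support_iff_exists_getVert.mpr
      ⟨1, rfl, by rw [hq, Walk.length_reverse]; omega⟩
    rw [hq, Walk.support_reverse, List.mem_reverse] at hx1
    have : p.support = c'.support.tail := Walk.support_tail_of_not_nil c' hnn
    rw [this] at hx1
    exact List.mem_of_mem_tail hx1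
  obtain ⟨-, hxP⟩ := key x hadjx hxs
  have hedge : s(u, x) ∈ q.edges := by
    have h1 := q.cons_tail_eq hqnn
    rw [← h1, Walk.edges_cons]
    exact List.mem_cons_self
  have hedge' : s(u, x) ∈ p.edges := by
    rwa [hq, Walk.edges_reverse, List.mem_reverse] at hedge
  have hnodup := hc'.1.1.edges_nodup
  rw [← c'.cons_tail_eq hnn, Walk.edges_cons] at hnodup
  have hxw : x = w := hxP.trans hwP.symm
  rw [hxw] at hedge'
  exact (List.nodup_cons.mp hnodup).1 hedge'

end Aux

/-- **Lemma.** The subgraph induced on the ball of radius k has a spanning tree of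
diameter at most 2k + 1. -/
theorem ball_has_low_diameter_spanning_tree (G : SimpleGraph V) (r : V) (k : ℕ) :
    ∃ T : SimpleGraph ↥(_root_.ball G r k), T ≤ G.induce (_root_.ball G r k) ∧ T.IsTree ∧
      ∀ u v : ↥(_root_.ball G r k), ∃ p : T.Walk u v, p.IsPath ∧ p.length ≤ 2 * k + 1 := by
  classical
  have hr : r ∈ _root_.ball G r k := ⟨Walk.nil, Nat.zero_le k⟩
  set A := _root_.ball G r k with hA
  set r' : ↥A := ⟨r, hr⟩ with hr'
  -- lift walks into the induced subgraph
  have lift : ∀ (u v : V) (p : G.Walk u v) (h : ∀ w ∈ p.support, w ∈ A),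
      ∃ q : (G.induce A).Walk ⟨u, h u p.start_mem_support⟩ ⟨v, h v p.end_mem_support⟩,
        q.length = p.length := by
    intro u v p
    induction p with
    | nil => intro h; exact ⟨Walk.nil, rfl⟩
    | @cons a b c hab p ih =>
      intro hs
      obtain ⟨q, hq⟩ := ih (fun w hw => hs w (by simp [hw]))
      refine ⟨Walk.cons (by simpa using hab) q, by simp [hq]⟩
  have reach : ∀ v : ↥A, ∃ q : (G.induce A).Walk r' v, q.length ≤ k := by
    rintro ⟨vv, hv⟩
    obtain ⟨p, hp⟩ := hv
    have hsup : ∀ w ∈ p.support, w ∈ A := fun w hw =>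
      ⟨p.takeUntil w hw, (p.length_takeUntil_le hw).trans hp⟩
    obtain ⟨q, hq⟩ := lift r vv p hsup
    exact ⟨q.copy (Subtype.ext rfl) (Subtype.ext rfl), by rw [Walk.length_copy, hq]; exact hp⟩
  set d : ↥A → ℕ := fun v => (G.induce A).dist r' v with hd
  have hreach : ∀ v : ↥A, (G.induce A).Reachable r' v := fun v => ⟨(reach v).choose⟩
  have hdk : ∀ v : ↥A, d v ≤ k := by
    intro v
    obtain ⟨q, hq⟩ := reach v
    exact (SimpleGraph.dist_le q).trans hq
  have hpar : ∀ v : ↥A, v ≠ r' → ∃ u, (G.induce A).Adj v u ∧ d u < d v := by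
    intro v hv
    have hne : d v ≠ 0 := fun h =>
      hv (((hreach v).dist_eq_zero_iff).mp h).symm
    obtain ⟨p, hp⟩ := SimpleGraph.exists_walk_of_dist_ne_zero hne
    set q := p.reverse with hq
    have hqlen : q.length = d v := by rw [hq, Walk.length_reverse, hp]
    have hqnn : ¬ q.Nil := Walk.not_nil_iff_lt_length.mpr (by omega)
    refine ⟨q.getVert 1, q.adj_snd hqnn, ?_⟩
    have hlt : q.tail.length + 1 = q.length := Walk.length_tail_add_one hqnn
    have hle : (G.induce A).dist r' (q.getVert 1) ≤ q.tail.reverse.length :=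
      SimpleGraph.dist_le _
    rw [Walk.length_reverse] at hle
    simp only [hd] at *
    omega
  obtain ⟨P, hP⟩ : ∃ P : ↥A → ↥A, ∀ v, v ≠ r' →
      (G.induce A).Adj v (P v) ∧ d (P v) < d v := by
    refine ⟨fun v => if h : v = r' then v else (hpar v h).choose, fun v h => ?_⟩
    simp only [dif_neg h]
    exact (hpar v h).choose_spec
  have hPne : ∀ a, a ≠ r' → P a ≠ a := fun a h => (hP a h).1.ne'
  refine ⟨parentGraph r' P hPne, ?_, ?_, ?_⟩
  · intro a b hadj
    rcases hadj with ⟨h1, h2⟩ | ⟨h1, h2⟩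
    · rw [← h2]; exact (hP a h1).1
    · rw [← h2]; exact (hP b h1).1.symm
  · have hne : Nonempty ↥A := ⟨r'⟩
    have hpre : (parentGraph r' P hPne).Preconnected := by
      intro a b
      obtain ⟨qa, -⟩ := parentGraph_walkToRoot r' P hPne d (fun a h => (hP a h).2) a
      obtain ⟨qb, -⟩ := parentGraph_walkToRoot r' P hPne d (fun a h => (hP a h).2) b
      have ha : (parentGraph r' P hPne).Reachable a r' := ⟨qa⟩
      have hb : (parentGraph r' P hPne).Reachable b r' := ⟨qb⟩
      exact ha.trans hb.symm
    exact ⟨Connected.mk hpre, parentGraph_isAcyclic r' P hPne d (fun a h => (hP a h).2)⟩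
  · intro u v
    obtain ⟨qu, hqu⟩ := parentGraph_walkToRoot r' P hPne d (fun a h => (hP a h).2) u
    obtain ⟨qv, hqv⟩ := parentGraph_walkToRoot r' P hPne d (fun a h => (hP a h).2) v
    set w := qu.append qv.reverse with hw
    refine ⟨w.bypass, w.bypass_isPath, ?_⟩
    have h1 := w.length_bypass_le
    have h2 : w.length = qu.length + qv.length := by
      rw [hw, Walk.length_append, Walk.length_reverse]
    have := hdk u
    have := hdk v
    omega
end

section
/- Let G be a simple graph, r a vertex of G, k a natural number, and B = B_k(r) the ball of radius k around r. Let R be a ray in G that is dominated by no vertex of B. Then there is a finite vertex set S disjoint from B and an index n ∈ ℕ such that every path in G from a vertex of B to a vertex R_m with m ≥ n meets S. -/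
open SimpleGraph

variable {V : Type}

/-- The vertex v dominates the ray R: there are infinitely many paths from v to
vertices of R pairwise sharing no vertex other than v. -/
def DominatesRay (G : SimpleGraph V) (v : V) (R : ℕ → V) : Prop :=
  ∃ (t : ℕ → ℕ) (p : ∀ n, G.Walk v (R (t n))),
    Function.Injective t ∧
    (∀ n, (p n).IsPath) ∧
    (∀ m n, m ≠ n → ∀ x, x ∈ (p m).support → x ∈ (p n).support → x = v)

section Aux

variable {G : SimpleGraph V}

private lemma mem_ball_self (G : SimpleGraph V) (r : V) (k : ℕ) : r ∈ _root_.ball G r k :=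
  ⟨SimpleGraph.Walk.nil, by simp⟩

private lemma ball_mono (G : SimpleGraph V) (r : V) {j k : ℕ} (h : j ≤ k) :
    _root_.ball G r j ⊆ _root_.ball G r k := fun _ ⟨p, hp⟩ => ⟨p, hp.trans h⟩

private lemma ball_zero (G : SimpleGraph V) (r : V) {v : V} (h : v ∈ _root_.ball G r 0) : v = r := by
  obtain ⟨p, hp⟩ := h
  exact (SimpleGraph.Walk.eq_of_length_eq_zero (Nat.le_zero.mp hp)).symm

private lemma ball_succ (G : SimpleGraph V) (r : V) {j : ℕ} {w : V}
    (h : w ∈ _root_.ball G r (j + 1)) : ∃ u ∈ _root_.ball G r j, u = w ∨ G.Adj u w := by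
  obtain ⟨p, hp⟩ := h
  rcases hq : p.reverse with _ | ⟨ha, q⟩
  · exact ⟨_, _root_.mem_ball_self G _ j, Or.inl rfl⟩
  · refine ⟨_, ⟨q.reverse, ?_⟩, Or.inr ha.symm⟩
    have := congrArg SimpleGraph.Walk.length hq
    rw [SimpleGraph.Walk.length_reverse, SimpleGraph.Walk.length_cons] at this
    rw [SimpleGraph.Walk.length_reverse]
    omega

private lemma exists_strictMono_avoid (Bad : ℕ → Set ℕ) (hfin : ∀ i, (Bad i).Finite) :
    ∃ f : ℕ → ℕ, StrictMono f ∧ ∀ a b, a < b → f b ∉ Bad (f a) := by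
  have hUn : ∀ t : ℕ, (⋃ i ∈ Set.Iic t, Bad i).Finite :=
    fun t => Set.Finite.biUnion (Set.finite_Iic t) (fun i _ => hfin i)
  have hbdd : ∀ t : ℕ, ∃ N, ∀ x ∈ ⋃ i ∈ Set.Iic t, Bad i, x ≤ N :=
    fun t => (hUn t).bddAbove
  choose N hN using hbdd
  set f : ℕ → ℕ := fun n => Nat.rec 0 (fun _ prev => N prev + prev + 1) n with hf
  have hfsucc : ∀ n, f (n + 1) = N (f n) + f n + 1 := fun n => rfl
  have hmono : StrictMono f := strictMono_nat_of_lt_succ (fun n => by rw [hfsucc]; omega)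
  refine ⟨f, hmono, fun a b hab hmem => ?_⟩
  obtain ⟨c, rfl⟩ : ∃ c, b = c + 1 := ⟨b - 1, by omega⟩
  have hac : f a ≤ f c := hmono.monotone (by omega)
  have : f (c + 1) ≤ N (f c) :=
    hN (f c) _ (Set.mem_biUnion (Set.mem_Iic.mpr hac) hmem)
  rw [hfsucc] at this
  omega

private lemma exists_tail (Pr : V → Prop) {w u : V} (q : G.Walk w u)
    (hq : q.IsPath) (hw : Pr w) :
    ∃ (x : V) (p : G.Walk x u), Pr x ∧ p.IsPath ∧ (∀ y ∈ p.support, y ∈ q.support) ∧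
      ∀ y ∈ p.support, Pr y → y = x := by
  classical
  by_cases hall : ∀ y ∈ q.support, Pr y → y = w
  · exact ⟨w, q, hw, hq, fun y hy => hy, hall⟩
  · push_neg at hall
    obtain ⟨y, hy, hPy, hyw⟩ := hall
    have hlt : (q.dropUntil y hy).length < q.length := by
      have hspec := congrArg SimpleGraph.Walk.length (q.take_spec hy)
      rw [SimpleGraph.Walk.length_append] at hspec
      have hpos : 0 < (q.takeUntil y hy).length := by
        rcases Nat.eq_zero_or_pos (q.takeUntil y hy).length with h0 | h
        · exact absurd (SimpleGraph.Walk.eq_of_length_eq_zero h0).symm hyw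
        · exact h
      omega
    obtain ⟨x, p, hx, hp, hsub, hlast⟩ :=
      exists_tail Pr (q.dropUntil y hy) (hq.dropUntil hy) hPy
    exact ⟨x, p, hx, hp, fun z hz => q.support_dropUntil_subset hy (hsub z hz), hlast⟩
termination_by q.length
decreasing_by exact hlt

end Aux

private lemma claim (G : SimpleGraph V) (r : V) (k : ℕ) (R : ℕ → V)
    (hdom : ∀ v ∈ _root_.ball G r k, ¬ DominatesRay G v R) :
    ∀ j, j ≤ k → ∀ (m : ℕ → ℕ) (w : ℕ → V) (p : ∀ i, G.Walk (w i) (R (m i))),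
      StrictMono m → (∀ i, (p i).IsPath) → (∀ i, w i ∈ _root_.ball G r j) →
      (∀ i i', i ≠ i' → ∀ x, x ∈ (p i).support → x ∉ (p i').support) → False := by
  intro j
  induction j with
  | zero =>
    intro _ m w p hm hp hw hdisj
    have h0 : w 0 = r := _root_.ball_zero G r (hw 0)
    have h1 : w 1 = r := _root_.ball_zero G r (hw 1)
    have m0 : r ∈ (p 0).support := by rw [← h0]; exact (p 0).start_mem_support
    have m1 : r ∈ (p 1).support := by rw [← h1]; exact (p 1).start_mem_support
    exact hdisj 0 1 (by omega) r m0 m1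
  | succ j ih =>
    intro hjk m w p hm hp hw hdisj
    classical
    have hjk' : j ≤ k := by omega
    choose u hu hadj using fun i => ball_succ G r (hw i)
    set p' : ∀ i, G.Walk (u i) (R (m i)) := fun i =>
      if h : u i ∈ (p i).support then (p i).dropUntil (u i) h
      else SimpleGraph.Walk.cons
        ((hadj i).resolve_left (fun he => h (by rw [he]; exact (p i).start_mem_support)))
        (p i) with hp'def
    have hp' : ∀ i, (p' i).IsPath := by
      intro i
      rw [hp'def]
      dsimp only
      split
      · exact (hp i).dropUntil _
      · exact (hp i).cons ‹_›
    have hsub : ∀ i x, x ∈ (p' i).support → x = u i ∨ x ∈ (p i).support := by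
      intro i x hx
      rw [hp'def] at hx
      dsimp only at hx
      split at hx
      · exact Or.inr ((p i).support_dropUntil_subset _ hx)
      · rw [SimpleGraph.Walk.support_cons] at hx
        rcases List.mem_cons.mp hx with h | h
        · exact Or.inl h
        · exact Or.inr h
    by_cases hcase : ∃ v, {i | u i = v}.Infinite
    · obtain ⟨v, hv⟩ := hcase
      have hvball : v ∈ _root_.ball G r k := by
        obtain ⟨i0, hi0⟩ := hv.nonempty
        rw [← hi0]
        exact _root_.ball_mono G r hjk' (hu i0)
      apply hdom v hvball
      let e : ℕ → ℕ := fun n => ((hv.natEmbedding _) n : ℕ)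
      have he : ∀ n, u (e n) = v := fun n => (hv.natEmbedding _ n).2
      have heinj : Function.Injective e :=
        fun a b hab => (hv.natEmbedding _).injective (Subtype.ext hab)
      refine ⟨fun n => m (e n), fun n => (p' (e n)).copy (he n) rfl,
        fun a b hab => heinj (hm.injective hab),
        fun n => by rw [SimpleGraph.Walk.isPath_copy]; exact hp' (e n), ?_⟩
      intro a b hab x hxa hxb
      rw [SimpleGraph.Walk.support_copy] at hxa hxb
      rcases hsub (e a) x hxa with h1 | h1
      · rw [h1, he a]
      rcases hsub (e b) x hxb with h2 | h2
      · rw [h2, he b]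
      exact absurd h2 (hdisj (e a) (e b) (fun hh => hab (heinj hh)) x h1)
    · push_neg at hcase
      have hfib : ∀ v, {i | u i = v}.Finite := fun v => hcase v
      have hB1 : ∀ i, {i' | u i' ∈ (p' i).support}.Finite := by
        intro i
        apply Set.Finite.subset
          (Set.Finite.biUnion ((p' i).support.finite_toSet) (fun x _ => hfib x))
        intro i' hi'
        exact Set.mem_biUnion hi' rfl
      have hB2 : ∀ i, {i' | u i ∈ (p' i').support}.Finite := by
        intro i
        have hss : {i' | u i ∈ (p i').support}.Subsingleton := by
          intro a ha b hb
          by_contra hne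
          exact hdisj a b hne (u i) ha hb
        apply Set.Finite.subset ((hfib (u i)).union hss.finite)
        intro i' hi'
        rcases hsub i' (u i) hi' with h | h
        · exact Or.inl h.symm
        · exact Or.inr h
      obtain ⟨f, hfmono, hfav⟩ := exists_strictMono_avoid
        (fun i => {i' | u i' ∈ (p' i).support} ∪ {i' | u i ∈ (p' i').support})
        (fun i => (hB1 i).union (hB2 i))
      have key : ∀ a b, a < b → ∀ x, x ∈ (p' (f a)).support → x ∉ (p' (f b)).support := by
        intro a b hab x hxa hxb
        have hbad1 : u (f b) ∉ (p' (f a)).support :=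
          fun hc => hfav a b hab (Or.inl hc)
        have hbad2 : u (f a) ∉ (p' (f b)).support :=
          fun hc => hfav a b hab (Or.inr hc)
        rcases hsub (f a) x hxa with h1 | h1
        · rw [h1] at hxb; exact hbad2 hxb
        rcases hsub (f b) x hxb with h2 | h2
        · rw [h2] at hxa; exact hbad1 hxa
        exact hdisj (f a) (f b) (hfmono.injective.ne (Nat.ne_of_lt hab)) x h1 h2
      apply ih hjk' (fun a => m (f a)) (fun a => u (f a)) (fun a => p' (f a))
        (hm.comp hfmono) (fun a => hp' (f a)) (fun a => hu (f a))
      intro a b hab x hxa hxb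
      rcases Nat.lt_or_ge a b with h | h
      · exact key a b h x hxa hxb
      · exact key b a (by omega) x hxb hxa

section MainAux

variable (G : SimpleGraph V) (r : V) (k : ℕ) (R : ℕ → V)

private def Hyp : Prop :=
  ∀ S : Finset V, (∀ v ∈ S, v ∉ _root_.ball G r k) → ∀ n : ℕ,
    ∃ m, n ≤ m ∧ ∃ w ∈ _root_.ball G r k, ∃ p : G.Walk w (R m),
      p.IsPath ∧ ∀ x ∈ p.support, x ∉ S

@[reducible] private def Dd : Type :=
  Σ' (m : ℕ) (w : V) (p : G.Walk w (R m)),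
    p.IsPath ∧ w ∈ _root_.ball G r k ∧ ∀ x ∈ p.support, x ∈ _root_.ball G r k → x = w

open Classical in
private noncomputable def Sfin (l : List (Dd G r k R)) : Finset V :=
  (l.foldr (fun (d : Dd G r k R) (acc : Finset V) => d.2.2.1.support.toFinset ∪ acc) ∅).filter (fun v => v ∉ _root_.ball G r k)

private lemma mem_Sfin {l : List (Dd G r k R)} {x : V} :
    x ∈ Sfin G r k R l ↔ (∃ d ∈ l, x ∈ d.2.2.1.support) ∧ x ∉ _root_.ball G r k := by
  classical
  have hfold : ∀ l' : List (Dd G r k R),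
      x ∈ l'.foldr (fun (d : Dd G r k R) (acc : Finset V) => d.2.2.1.support.toFinset ∪ acc) ∅ ↔
        ∃ d ∈ l', x ∈ d.2.2.1.support := by
    intro l'
    induction l' with
    | nil => simp
    | cons d t ih => simp [ih]
  unfold Sfin
  rw [Finset.mem_filter, hfold]

private def Nl (l : List (Dd G r k R)) : ℕ := (l.map (fun d => d.1)).foldr max 0 + 1

private lemma lt_Nl {l : List (Dd G r k R)} {d : Dd G r k R} (h : d ∈ l) :
    d.1 < Nl G r k R l := by
  unfold Nl
  have : d.1 ≤ (l.map (fun d => d.1)).foldr max 0 := by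
    induction l with
    | nil => cases h
    | cons a t ih =>
      rw [List.map_cons, List.foldr_cons]
      rcases List.mem_cons.mp h with rfl | h'
      · exact le_max_left _ _
      · exact le_trans (ih h') (le_max_right _ _)
  omega

private lemma step_ex (H : Hyp G r k R) (l : List (Dd G r k R)) :
    ∃ d : Dd G r k R, Nl G r k R l ≤ d.1 ∧
      ∀ x ∈ d.2.2.1.support, x ∉ Sfin G r k R l := by
  obtain ⟨m, hmn, w, hwB, q, hq, hqS⟩ :=
    H (Sfin G r k R l) (fun v hv => ((mem_Sfin G r k R).mp hv).2) (Nl G r k R l)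
  obtain ⟨x, p, hxB, hp, hsubq, hlast⟩ := exists_tail (· ∈ _root_.ball G r k) q hq hwB
  exact ⟨⟨m, x, p, hp, hxB, hlast⟩, hmn, fun y hy hyS => hqS y (hsubq y hy) hyS⟩

private noncomputable def LL (H : Hyp G r k R) : ℕ → List (Dd G r k R)
  | 0 => []
  | n + 1 => LL H n ++ [(step_ex G r k R H (LL H n)).choose]

private noncomputable def Ff (H : Hyp G r k R) (n : ℕ) : Dd G r k R :=
  (step_ex G r k R H (LL G r k R H n)).choose

private lemma Fspec (H : Hyp G r k R) (n : ℕ) :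
    Nl G r k R (LL G r k R H n) ≤ (Ff G r k R H n).1 ∧
      ∀ x ∈ (Ff G r k R H n).2.2.1.support, x ∉ Sfin G r k R (LL G r k R H n) :=
  (step_ex G r k R H (LL G r k R H n)).choose_spec

private lemma mem_LL (H : Hyp G r k R) :
    ∀ n (d : Dd G r k R), d ∈ LL G r k R H n ↔ ∃ i, i < n ∧ d = Ff G r k R H i := by
  intro n
  induction n with
  | zero => simp [LL]
  | succ n ih =>
    intro d
    simp only [LL, List.mem_append, List.mem_singleton, ih]
    constructor
    · rintro (⟨i, hi, rfl⟩ | rfl)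
      · exact ⟨i, by omega, rfl⟩
      · exact ⟨n, by omega, rfl⟩
    · rintro ⟨i, hi, rfl⟩
      rcases Nat.lt_or_ge i n with h | h
      · exact Or.inl ⟨i, h, rfl⟩
      · have hin : i = n := by omega
        subst hin
        exact Or.inr rfl

end MainAux

/-- **Lemma.** If no vertex of the ball $B = B_k(r)$ dominates the ray R, then a tail of R
can be separated from B by a finite vertex set disjoint from B. -/
theorem finite_separator_of_undominated_ray (G : SimpleGraph V) (r : V) (k : ℕ)
    (R : ℕ → V) (hR : IsRay G R)
    (hdom : ∀ v ∈ _root_.ball G r k, ¬ DominatesRay G v R) :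
    ∃ S : Finset V, (∀ v ∈ S, v ∉ _root_.ball G r k) ∧
      ∃ n : ℕ, ∀ m, n ≤ m → ∀ w ∈ _root_.ball G r k, ∀ p : G.Walk w (R m),
        p.IsPath → ∃ x ∈ p.support, x ∈ S := by
    classical
  by_contra hcon
  push_neg at hcon
  have H : Hyp G r k R := hcon
  let m : ℕ → ℕ := fun n => (Ff G r k R H n).1
  let w : ℕ → V := fun n => (Ff G r k R H n).2.1
  let p : ∀ n, G.Walk (w n) (R (m n)) := fun n => (Ff G r k R H n).2.2.1
  have hpath : ∀ n, (p n).IsPath := fun n => (Ff G r k R H n).2.2.2.1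
  have hball : ∀ n, w n ∈ _root_.ball G r k := fun n => (Ff G r k R H n).2.2.2.2.1
  have honly : ∀ n x, x ∈ (p n).support → x ∈ _root_.ball G r k → x = w n :=
    fun n => (Ff G r k R H n).2.2.2.2.2
  have hmem : ∀ i n, i < n → Ff G r k R H i ∈ LL G r k R H n :=
    fun i n hin => (mem_LL G r k R H n _).mpr ⟨i, hin, rfl⟩
  have hmlt : ∀ i n, i < n → m i < m n := fun i n hin =>
    lt_of_lt_of_le (lt_Nl G r k R (hmem i n hin)) (Fspec G r k R H n).1
  have hm : StrictMono m := strictMono_nat_of_lt_succ (fun n => hmlt n (n + 1) (by omega))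
  have hshare : ∀ i n, i < n → ∀ x, x ∈ (p i).support → x ∈ (p n).support →
      x = w i ∧ x = w n := by
    intro i n hin x hxi hxn
    by_cases hxB : x ∈ _root_.ball G r k
    · exact ⟨honly i x hxi hxB, honly n x hxn hxB⟩
    · exfalso
      have hxS : x ∈ Sfin G r k R (LL G r k R H n) :=
        (mem_Sfin G r k R).mpr ⟨⟨Ff G r k R H i, hmem i n hin, hxi⟩, hxB⟩
      exact (Fspec G r k R H n).2 x hxn hxS
  have hshare' : ∀ i n, i ≠ n → ∀ x, x ∈ (p i).support → x ∈ (p n).support →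
      x = w i ∧ x = w n := by
    intro i n hin x hxi hxn
    rcases Nat.lt_or_ge i n with h | h
    · exact hshare i n h x hxi hxn
    · have h' : n < i := by omega
      exact ⟨(hshare n i h' x hxn hxi).2, (hshare n i h' x hxn hxi).1⟩
  by_cases hcase : ∃ v, {n | w n = v}.Infinite
  · obtain ⟨v, hv⟩ := hcase
    have hvb : v ∈ _root_.ball G r k := by
      obtain ⟨i0, h0⟩ := hv.nonempty
      rw [← h0]
      exact hball i0
    apply hdom v hvb
    let e : ℕ → ℕ := fun n => ((hv.natEmbedding _) n : ℕ)
    have he : ∀ n, w (e n) = v := fun n => (hv.natEmbedding _ n).2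
    have heinj : Function.Injective e :=
      fun a b hab => (hv.natEmbedding _).injective (Subtype.ext hab)
    refine ⟨fun n => m (e n), fun n => (p (e n)).copy (he n) rfl,
      fun a b hab => heinj (hm.injective hab),
      fun n => by rw [SimpleGraph.Walk.isPath_copy]; exact hpath (e n), ?_⟩
    intro a b hab x hxa hxb
    rw [SimpleGraph.Walk.support_copy] at hxa hxb
    have := hshare' (e a) (e b) (fun hh => hab (heinj hh)) x hxa hxb
    rw [this.1, he a]
  · push_neg at hcase
    have hfib : ∀ v, {n | w n = v}.Finite := fun v => hcase v
    obtain ⟨f, hfmono, hfav⟩ := exists_strictMono_avoid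
      (fun n => {n' | w n' = w n}) (fun n => hfib (w n))
    have hwne : ∀ a b, a ≠ b → w (f a) ≠ w (f b) := by
      intro a b hab
      rcases Nat.lt_or_ge a b with h | h
      · exact fun hc => hfav a b h hc.symm
      · exact fun hc => hfav b a (by omega) hc
    apply claim G r k R hdom k (le_refl k) (fun a => m (f a)) (fun a => w (f a))
      (fun a => p (f a)) (hm.comp hfmono) (fun a => hpath (f a)) (fun a => hball (f a))
    intro a b hab x hxa hxb
    have := hshare' (f a) (f b) (hfmono.injective.ne hab) x hxa hxb
    exact hwne a b hab (this.1 ▸ this.2 ▸ rfl)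
end

section
/- Let G be a connected simple graph. Then the set of dominated ends of G is a Borel subset (indeed a countable union of closed subsets) of the end space of G. -/
open SimpleGraph

variable {V : Type}

lemma compSet_notMem {G : SimpleGraph V} {A : Set V}
    {C : (G.induce A).ConnectedComponent} {x : V}
    (hx : x ∈ compSet G C) : x ∈ A := by
  obtain ⟨x', _, rfl⟩ := hx
  exact x'.2

lemma mem_compSet_of_adj {G : SimpleGraph V} {A : Set V}
    {C : (G.induce A).ConnectedComponent} {x y : V}
    (hx : x ∈ compSet G C) (hadj : G.Adj y x) (hy : y ∈ A) :
    y ∈ compSet G C := by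
  obtain ⟨x', hx', rfl⟩ := hx
  refine ⟨⟨y, hy⟩, ?_, rfl⟩
  rw [ConnectedComponent.mem_supp_iff] at hx' ⊢
  rw [← hx']
  refine ConnectedComponent.sound (Adj.reachable ?_)
  show (G.induce A).Adj ⟨y, hy⟩ x'
  simpa using hadj

lemma compSet_nonempty {G : SimpleGraph V} {A : Set V}
    (C : (G.induce A).ConnectedComponent) : (compSet G C).Nonempty := by
  obtain ⟨u, hu⟩ := C.exists_rep
  exact ⟨u.val, ⟨u, by rw [ConnectedComponent.mem_supp_iff]; exact hu, rfl⟩⟩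

lemma exists_adj_into {G : SimpleGraph V} {A : Set V} {v : V} {C : Set V}
    (hclosed : ∀ x y, x ∈ C → G.Adj y x → y ∈ A → y ≠ v → y ∈ C)
    (hvC : v ∉ C) :
    ∀ {a b : ↥A}, (G.induce A).Walk a b → (a : V) ∈ C → (b : V) = v →
      ∃ x ∈ C, G.Adj v x := by
  intro a b p
  induction p with
  | nil => intro ha hb; exact absurd (hb ▸ ha) hvC
  | @cons u c w h q ih =>
    intro ha hb
    have hG : G.Adj ↑u ↑c := by simpa using h
    by_cases hc : (↑c : V) ∈ C
    · exact ih hc hb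
    · by_cases hcv : (↑c : V) = v
      · exact ⟨↑u, ha, hcv ▸ hG.symm⟩
      · exact absurd (hclosed ↑u ↑c ha hG.symm c.2 hcv) hc

lemma dominator_adj {G : SimpleGraph V} {v : V} {ω : GraphEnd G}
    (hdom : Dominates G v ω) (S : Finset V) :
    ∃ x ∈ compSet G (ω.1 S), G.Adj v x := by
  classical
  by_cases hv : v ∈ S
  · set A : Finset V := S.erase v with hA
    have hvA : v ∉ A := Finset.notMem_erase v S
    obtain ⟨w, hadj, hw⟩ := hdom A hvA
    have hvCA : v ∈ compSet G (ω.1 A) :=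
      mem_compSet_of_adj hw hadj (by simpa using hvA)
    obtain ⟨x₀, hx₀⟩ := compSet_nonempty (ω.1 S)
    have hsub : compSet G (ω.1 S) ⊆ compSet G (ω.1 A) := ω.2 (Finset.erase_subset v S)
    obtain ⟨x', hx', hx'v⟩ := hsub hx₀
    obtain ⟨v', hv', hv'v⟩ := hvCA
    have hmk : (G.induce ((↑A : Set V)ᶜ)).connectedComponentMk x'
        = (G.induce ((↑A : Set V)ᶜ)).connectedComponentMk v' := by
      rw [ConnectedComponent.mem_supp_iff] at hx' hv'
      rw [hx', hv']
    obtain ⟨p⟩ := ConnectedComponent.exact hmk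
    refine exists_adj_into (A := ((↑A : Set V)ᶜ)) (v := v) (C := compSet G (ω.1 S))
      ?_ ?_ p (by rw [hx'v]; exact hx₀) hv'v
    · intro x y hx hadj hyA hyv
      refine mem_compSet_of_adj hx hadj ?_
      intro hyS
      refine hyA ?_
      have hyS' : y ∈ S := by simpa using hyS
      simp only [hA, Finset.coe_erase, Set.mem_diff, Finset.mem_coe]
      exact ⟨hyS', by simpa using hyv⟩
    · intro hvC
      exact (compSet_notMem hvC) (by simpa using hv)
  · obtain ⟨w, hadj, hw⟩ := hdom S hv
    exact ⟨w, hw, hadj⟩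

lemma walk_penultimate {G : SimpleGraph V} :
    ∀ (n : ℕ) {u w : V} (p : G.Walk u w), p.length = n + 1 →
      ∃ y, G.Adj y w ∧ ∃ q : G.Walk u y, q.length = n := by
  intro n u w p
  induction p generalizing n with
  | nil => simp
  | @cons a b c h q ih =>
    intro hl
    cases n with
    | zero =>
      have h0 : q.length = 0 := by simpa using hl
      have hbc : b = c := Walk.eq_of_length_eq_zero h0
      subst hbc
      exact ⟨a, h, Walk.nil, rfl⟩
    | succ k =>
      obtain ⟨y, hadj, q', hq'⟩ := ih k (by simpa using hl)
      exact ⟨y, hadj, Walk.cons h q', by simp [hq']⟩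

lemma dominated_of_nearby {G : SimpleGraph V} (ω : GraphEnd G) :
    ∀ (n : ℕ) (v : V),
      (∀ S : Finset V, ∃ x ∈ compSet G (ω.1 S), ∃ p : G.Walk v x, p.length ≤ n) →
      ∃ u, Dominates G u ω := by
  intro n
  induction n with
  | zero =>
    intro v h
    obtain ⟨x, hx, p, hp⟩ := h {v}
    have hvx : v = x := Walk.eq_of_length_eq_zero (Nat.le_zero.mp hp)
    have := compSet_notMem (hvx ▸ hx)
    simp at this
  | succ n ih =>
    intro v h
    classical
    by_cases hA : ∀ S : Finset V, ∃ x ∈ compSet G (ω.1 S), ∃ p : G.Walk v x, p.length ≤ n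
    · exact ih v hA
    push_neg at hA
    obtain ⟨S₀, hS₀⟩ := hA
    by_contra hno
    push_neg at hno
    have hky : ∀ y : V, ∃ Sy : Finset V, ∀ x ∈ compSet G (ω.1 Sy), ¬ G.Adj y x := by
      intro y
      by_contra hy
      push_neg at hy
      refine hno y (fun S _ => ?_)
      obtain ⟨x, hx, ha⟩ := hy S
      exact ⟨x, ha, hx⟩
    choose Sy hSy using hky
    set T1 : Finset V := S₀ ∪ S₀.biUnion Sy with hT1
    obtain ⟨x, hx, p, hp⟩ := h T1
    have hxS₀ : x ∈ compSet G (ω.1 S₀) := ω.2 Finset.subset_union_left hx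
    have hlen : p.length = n + 1 := le_antisymm hp (hS₀ x hxS₀ p)
    obtain ⟨y, hadj, q, hq⟩ := walk_penultimate n p hlen
    have hyS₀ : y ∈ S₀ := by
      by_contra hy
      have hyC : y ∈ compSet G (ω.1 S₀) := mem_compSet_of_adj hxS₀ hadj (by simpa)
      have := hS₀ y hyC q
      omega
    have hsub : Sy y ⊆ T1 :=
      (Finset.subset_biUnion_of_mem Sy hyS₀).trans Finset.subset_union_right
    exact hSy y x (ω.2 hsub hx) hadj

/-- **Lemma.** For a connected graph, the set of dominated ends is a countable union of
closed sets, in particular a Borel subset of the end space. -/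
theorem dominated_ends_borel (G : SimpleGraph V) (hconn : G.Connected) :
    @MeasurableSet _ (borel (GraphEnd G)) {ω : GraphEnd G | ∃ v, Dominates G v ω} ∧
    ∃ f : ℕ → Set (GraphEnd G), (∀ n, IsClosed (f n)) ∧
      {ω : GraphEnd G | ∃ v, Dominates G v ω} = ⋃ n, f n := by
  obtain ⟨r⟩ : Nonempty V := hconn.nonempty
  set f : ℕ → Set (GraphEnd G) := fun n =>
    {ω | ∀ S : Finset V, ∃ x ∈ compSet G (ω.1 S), ∃ p : G.Walk r x, p.length ≤ n} with hf
  have hclosed : ∀ n, IsClosed (f n) := by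
    intro n
    have heq : f n = ⋂ S : Finset V,
        (fun ω : GraphEnd G => ω.1 S) ⁻¹'
          {C | ∃ x ∈ compSet G C, ∃ p : G.Walk r x, p.length ≤ n} := by
      ext ω
      simp [hf, Set.mem_iInter]
    rw [heq]
    refine isClosed_iInter fun S => ?_
    have hcont : Continuous (fun ω : GraphEnd G => ω.1 S) :=
      (continuous_apply S).comp continuous_subtype_val
    haveI : DiscreteTopology ((G.induce ((↑S : Set V)ᶜ)).ConnectedComponent) := ⟨rfl⟩
    exact (isClosed_discrete _).preimage hcont
  have hunion : {ω : GraphEnd G | ∃ v, Dominates G v ω} = ⋃ n, f n := by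
    ext ω
    simp only [Set.mem_setOf_eq, Set.mem_iUnion]
    constructor
    · rintro ⟨v, hdom⟩
      obtain ⟨w0⟩ := hconn.preconnected r v
      refine ⟨w0.length + 1, fun S => ?_⟩
      obtain ⟨x, hx, hadj⟩ := dominator_adj hdom S
      exact ⟨x, hx, w0.concat hadj, by simp [Walk.length_concat]⟩
    · rintro ⟨n, hn⟩
      exact dominated_of_nearby ω n r hn
  refine ⟨?_, f, hclosed, hunion⟩
  rw [hunion]
  refine MeasurableSet.iUnion fun n => ?_
  have h1 : @MeasurableSet _ (borel (GraphEnd G)) ((f n)ᶜ) :=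
    MeasurableSpace.measurableSet_generateFrom ((hclosed n).isOpen_compl)
  simpa using h1.compl
end

section
/- Let G be a simple graph and let o be a nonempty edge set that meets every finitely coverable cut evenly and such that for every finite vertex set W only finitely many components of G − W contain an endvertex of an edge of o. Then o has a nonempty subset u that meets every finitely coverable cut evenly and is geometrically connected. -/
open SimpleGraph

variable {V : Type}

private lemma sym2_rep {α : Type*} (e : Sym2 α) : ∃ x y, e = s(x, y) :=
  Sym2.inductionOn e fun x y => ⟨x, y, rfl⟩

/-- **Lemma.** Every nonempty edge set meeting every finitely coverable cut evenly,
such that only finitely many components of G - W meet its endvertices for each finite W,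
includes a nonempty subset that meets every finitely coverable cut evenly and is
geometrically connected. -/
theorem includes_geom_connected_subset (G : SimpleGraph V) (o : Set (Sym2 V))
    (ho : o ⊆ G.edgeSet) (hne : o.Nonempty)
    (heven : ∀ c, IsCut G c → FinitelyCoverable c → MeetsEvenly o c)
    (hfin : ∀ W : Finset V,
      {C : (G.induce ((↑W : Set V)ᶜ)).ConnectedComponent |
        ∃ e ∈ o, ∃ v ∈ e, v ∈ compSet G C}.Finite) :
    ∃ u ⊆ o, u.Nonempty ∧
      (∀ c, IsCut G c → FinitelyCoverable c → MeetsEvenly u c) ∧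
      GeomConnected G u := by
  clear hfin
  obtain ⟨e₀, he₀⟩ := hne
  set 𝒰 : Set (Set (Sym2 V)) :=
    {w | w ⊆ o ∧ e₀ ∈ w ∧ ∀ c, IsCut G c → FinitelyCoverable c → MeetsEvenly w c} with h𝒰
  have hmem : ∀ w : Set (Sym2 V), w ∈ 𝒰 ↔
      (w ⊆ o ∧ e₀ ∈ w ∧ ∀ c, IsCut G c → FinitelyCoverable c → MeetsEvenly w c) := by
    intro w; rw [h𝒰]; rfl
  have hchain : ∀ t ⊆ 𝒰, IsChain (· ⊆ ·) t → t.Nonempty → ∃ lb ∈ 𝒰, ∀ s ∈ t, lb ⊆ s := by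
    intro t ht hc hne'
    obtain ⟨w1, hw1⟩ := hne'
    refine ⟨⋂₀ t, (hmem _).2 ⟨?_, ?_, ?_⟩, fun s hs => Set.sInter_subset_of_mem hs⟩
    · exact (Set.sInter_subset_of_mem hw1).trans ((hmem _).1 (ht hw1)).1
    · exact Set.mem_sInter.2 fun w hw => ((hmem _).1 (ht hw)).2.1
    · intro c hcut hfc
      have hoc : (o ∩ c).Finite := (heven c hcut hfc).1
      have himfin : ((fun w => w ∩ c) '' t).Finite := by
        refine hoc.finite_subsets.subset ?_
        rintro _ ⟨w, hw, rfl⟩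
        exact Set.inter_subset_inter_left c ((hmem _).1 (ht hw)).1
      obtain ⟨w0, hw0, hminw0⟩ :=
        Set.Finite.exists_minimalFor' (fun w => w ∩ c) t himfin ⟨w1, hw1⟩
      have hminw : ∀ w ∈ t, w ∩ c ⊆ w0 ∩ c → w0 ∩ c = w ∩ c :=
        fun w hw h => Set.Subset.antisymm (hminw0 hw h) h
      have hEq : ⋂₀ t ∩ c = w0 ∩ c := by
        apply Set.Subset.antisymm
        · exact Set.inter_subset_inter_left c (Set.sInter_subset_of_mem hw0)
        · rintro x ⟨hxw0, hxc⟩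
          refine ⟨Set.mem_sInter.2 fun w hw => ?_, hxc⟩
          by_cases hww : w = w0
          · exact hww ▸ hxw0
          · rcases hc hw hw0 hww with h | h
            · have h2 := hminw w hw (Set.inter_subset_inter_left c h)
              have : x ∈ w ∩ c := h2 ▸ (⟨hxw0, hxc⟩ : x ∈ w0 ∩ c)
              exact this.1
            · exact h hxw0
      show (⋂₀ t ∩ c).Finite ∧ Even (⋂₀ t ∩ c).ncard
      rw [hEq]
      exact ((hmem _).1 (ht hw0)).2.2 c hcut hfc
  obtain ⟨u, -, hu⟩ := zorn_superset_nonempty 𝒰 hchain o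
    ((hmem o).2 ⟨subset_rfl, he₀, heven⟩)
  obtain ⟨huo, he₀u, hueven⟩ := (hmem u).1 hu.1
  refine ⟨u, huo, ⟨e₀, he₀u⟩, hueven, ?_⟩
  rintro b hbcut hbfc hex
  by_contra hcon
  rw [Set.not_nonempty_iff_eq_empty] at hcon
  set H := G.deleteEdges b with hH
  obtain ⟨C, D, hCD, ⟨e, heu, heC⟩, ⟨f, hfu, hfD⟩⟩ := hex
  have hnb : ∀ g ∈ u, g ∉ b := fun g hg hgb =>
    Set.eq_empty_iff_forall_notMem.1 hcon g ⟨hg, hgb⟩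
  have hadj : ∀ g ∈ u, ∀ x y : V, g = s(x, y) → H.Adj x y := by
    intro g hg x y hxy
    have hgE : g ∈ H.edgeSet := by
      rw [hH, edgeSet_deleteEdges]
      exact ⟨ho (huo hg), hnb g hg⟩
    rw [hxy] at hgE
    exact hgE
  have hcompmem : ∀ g ∈ u, ∀ x y : V, g = s(x, y) →
      H.connectedComponentMk x = H.connectedComponentMk y :=
    fun g hg x y hxy => ConnectedComponent.connectedComponentMk_eq_of_adj (hadj g hg x y hxy)
  obtain ⟨x₀, y₀, hx₀y₀⟩ := sym2_rep e₀
  set C₀ := H.connectedComponentMk x₀ with hC₀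
  have hEICiff : ∀ g ∈ u, ∀ x y : V, g = s(x, y) →
      ∀ K : H.ConnectedComponent, (EdgeInComp H K g ↔ H.connectedComponentMk x = K) := by
    intro g hg x y hxy K
    constructor
    · intro h
      exact h x (by rw [hxy]; exact Sym2.mem_mk_left x y)
    · intro h v hv
      rw [hxy, Sym2.mem_iff] at hv
      rcases hv with h' | h'
      · rw [h']; exact h
      · rw [h']; exact ((hcompmem g hg x y hxy).symm).trans h
  set u' : Set (Sym2 V) := {g ∈ u | EdgeInComp H C₀ g} with hu'
  have hu'sub : u' ⊆ u := Set.sep_subset _ _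
  have hu'𝒰 : u' ∈ 𝒰 := by
    refine (hmem _).2 ⟨hu'sub.trans huo, ?_, ?_⟩
    · refine ⟨he₀u, ?_⟩
      exact (hEICiff e₀ he₀u x₀ y₀ hx₀y₀ C₀).2 rfl
    · intro c hcut hcfc
      obtain ⟨A, hA⟩ := hcut
      obtain ⟨Sc, hScf, hSc⟩ := hcfc
      obtain ⟨Sb, hSbf, hSb⟩ := hbfc
      set Ad : Set V := {v | H.connectedComponentMk v = C₀} ∩ A with hAd
      set d : Set (Sym2 V) :=
        {e | e ∈ G.edgeSet ∧ ∃ x y, e = s(x, y) ∧ x ∈ Ad ∧ y ∉ Ad} with hd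
      have hdcut : IsCut G d := ⟨Ad, rfl⟩
      have hdfc : FinitelyCoverable d := by
        refine ⟨Sb ∪ Sc, hSbf.union hScf, ?_⟩
        rintro g ⟨hgE, x, y, rfl, ⟨hxX, hxA⟩, hy⟩
        by_cases hyX : H.connectedComponentMk y = C₀
        · have hyA : y ∉ A := fun hyA => hy ⟨hyX, hyA⟩
          obtain ⟨v, hvS, hv⟩ := hSc s(x, y)
            (by rw [hA]; exact ⟨hgE, x, y, rfl, hxA, hyA⟩)
          exact ⟨v, Set.mem_union_right _ hvS, hv⟩
        · have hgb : s(x, y) ∈ b := by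
            by_contra hgb
            have hHadj : H.Adj x y := by
              rw [hH, SimpleGraph.deleteEdges_adj]
              exact ⟨(SimpleGraph.mem_edgeSet G).1 hgE, hgb⟩
            exact hyX ((ConnectedComponent.connectedComponentMk_eq_of_adj hHadj).symm.trans hxX)
          obtain ⟨v, hvS, hv⟩ := hSb _ hgb
          exact ⟨v, Set.mem_union_left _ hvS, hv⟩
      have hkey : u' ∩ c = u ∩ d := by
        ext g
        constructor
        · rintro ⟨⟨hgu, hgC⟩, hgc⟩
          rw [hA] at hgc
          obtain ⟨hgE, x, y, hxy, hxA, hyA⟩ := hgc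
          refine ⟨hgu, hgE, x, y, hxy, ⟨?_, hxA⟩, fun h => hyA h.2⟩
          exact hgC x (by rw [hxy]; exact Sym2.mem_mk_left x y)
        · rintro ⟨hgu, hgE, x, y, hxy, ⟨hxX, hxA⟩, hy⟩
          have hmk := hcompmem g hgu x y hxy
          have hyX : H.connectedComponentMk y = C₀ := hmk.symm.trans hxX
          have hyA : y ∉ A := fun h => hy ⟨hyX, h⟩
          refine ⟨⟨hgu, ?_⟩, ?_⟩
          · intro v hv
            rw [hxy, Sym2.mem_iff] at hv
            rcases hv with h' | h'
            · rw [h']; exact hxX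
            · rw [h']; exact hyX
          · rw [hA]; exact ⟨hgE, x, y, hxy, hxA, hyA⟩
      show (u' ∩ c).Finite ∧ Even (u' ∩ c).ncard
      rw [hkey]
      exact hueven d hdcut hdfc
  have huu' : u' = u := Set.Subset.antisymm hu'sub (hu.2 hu'𝒰 hu'sub)
  have hbad : ∃ g ∈ u, ∃ K : H.ConnectedComponent, K ≠ C₀ ∧ EdgeInComp H K g := by
    by_cases h : C = C₀
    · exact ⟨f, hfu, D, fun hD => hCD (h.trans hD.symm), hfD⟩
    · exact ⟨e, heu, C, h, heC⟩
  obtain ⟨g, hgu, K, hK, hgK⟩ := hbad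
  have hg' : g ∈ u' := huu'.symm ▸ hgu
  obtain ⟨x, y, hxy⟩ := sym2_rep g
  have h1 : H.connectedComponentMk x = C₀ :=
    (hEICiff g hgu x y hxy C₀).1 hg'.2
  have h2 : H.connectedComponentMk x = K :=
    (hEICiff g hgu x y hxy K).1 hgK
  exact hK (h2.symm.trans h1)
end

section
/- Let G be a simple graph, let o be an edge set that meets every finitely coverable cut evenly, let e ∈ o, and let u = {f ∈ o : o has nonempty intersection with every finitely coverable cut d such that no component of the graph obtained from G by deleting the edges of d contains both e and f}. Then u is geometrically connected. -/
open SimpleGraph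

variable {V : Type}

section GeomAux

private lemma fc_subset {c d : Set (Sym2 V)} (h : c ⊆ d) (hd : FinitelyCoverable d) :
    FinitelyCoverable c := by
  obtain ⟨S, hS, hSm⟩ := hd
  exact ⟨S, hS, fun e he => hSm e (h he)⟩

private lemma fc_union {b : Set (Sym2 V)} {s : Set (Sym2 V)} (hs : s.Finite)
    {f : Sym2 V → Set (Sym2 V)} (hb : FinitelyCoverable b)
    (hf : ∀ h ∈ s, FinitelyCoverable (f h)) :
    FinitelyCoverable (b ∪ ⋃ h ∈ s, f h) := by
  choose! Sf hSf1 hSf2 using hf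
  obtain ⟨Sb, hSb, hSbm⟩ := hb
  refine ⟨Sb ∪ ⋃ h ∈ s, Sf h, hSb.union (hs.biUnion fun h hh => hSf1 h hh), ?_⟩
  rintro e (he | he)
  · obtain ⟨v, hv, hve⟩ := hSbm e he
    exact ⟨v, Or.inl hv, hve⟩
  · rw [Set.mem_iUnion₂] at he
    obtain ⟨h, hh, hef⟩ := he
    obtain ⟨v, hv, hve⟩ := hSf2 h hh e hef
    exact ⟨v, Or.inr (Set.mem_iUnion₂.mpr ⟨h, hh, hv⟩), hve⟩

private lemma edgeInComp_mk {H : SimpleGraph V} {x y : V} (h : H.Adj x y) :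
    EdgeInComp H (H.connectedComponentMk x) s(x, y) := by
  intro v hv
  rcases Sym2.mem_iff.mp hv with rfl | rfl
  · rfl
  · exact ConnectedComponent.sound h.symm.reachable

private lemma deleteEdges_anti' {G : SimpleGraph V} {s t : Set (Sym2 V)} (h : s ⊆ t) :
    G.deleteEdges t ≤ G.deleteEdges s := by
  intro x y hxy
  rw [deleteEdges_adj] at hxy ⊢
  exact ⟨hxy.1, fun hm => hxy.2 (h hm)⟩

private lemma walk_stay {G' : SimpleGraph V} {A : Set V}
    (hA : ∀ x y, x ∈ A → G'.Adj x y → y ∈ A) :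
    ∀ {x y : V}, G'.Walk x y → x ∈ A → y ∈ A
  | _, _, .nil, hx => hx
  | _, _, .cons h p, hx => walk_stay hA p (hA _ _ hx h)

private lemma geomAux (G : SimpleGraph V) (o : Set (Sym2 V)) (ho : o ⊆ G.edgeSet)
    (v0 v1 : V) (he : s(v0, v1) ∈ o) (g : Sym2 V) (w0 : V) (hw0 : w0 ∈ g)
    (b : Set (Sym2 V)) (hbfc : FinitelyCoverable b)
    (hobfin : (o ∩ b).Finite) (heb : s(v0, v1) ∉ b)
    (hgu : ∀ d, IsCut G d → FinitelyCoverable d →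
      (∀ C : (G.deleteEdges d).ConnectedComponent,
        ¬ (EdgeInComp (G.deleteEdges d) C s(v0, v1) ∧ EdgeInComp (G.deleteEdges d) C g)) →
      (o ∩ d).Nonempty)
    (D : (G.deleteEdges b).ConnectedComponent)
    (hED : (G.deleteEdges b).connectedComponentMk v0 ≠ D)
    (hgD : EdgeInComp (G.deleteEdges b) D g)
    (hnu : ∀ h ∈ o ∩ b, ∃ d, IsCut G d ∧ FinitelyCoverable d ∧
      (∀ C : (G.deleteEdges d).ConnectedComponent,
        ¬ (EdgeInComp (G.deleteEdges d) C s(v0, v1) ∧ EdgeInComp (G.deleteEdges d) C h)) ∧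
      o ∩ d = ∅) : False := by
  have hGe : G.Adj v0 v1 := (G.mem_edgeSet).mp (ho he)
  choose! dfun hd1 hd2 hd3 hd4 using hnu
  set dd : Set (Sym2 V) := b ∪ ⋃ h ∈ o ∩ b, dfun h with hdd
  have hddfc : FinitelyCoverable dd := fc_union hobfin hbfc (fun h hh => hd2 h hh)
  have hbdd : b ⊆ dd := Set.subset_union_left
  have hodfun : ∀ h ∈ o ∩ b, ∀ k ∈ o, k ∉ dfun h := fun h hh k hk hkd =>
    Set.eq_empty_iff_forall_notMem.mp (hd4 h hh) k ⟨hk, hkd⟩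
  have hedd : s(v0, v1) ∉ dd := by
    rintro (h | h)
    · exact heb h
    · rw [Set.mem_iUnion₂] at h
      obtain ⟨h', hh', hm⟩ := h
      exact hodfun h' hh' _ he hm
  set H := G.deleteEdges dd with hH
  set A : Set V := {w | H.Reachable v0 w} with hA
  set c : Set (Sym2 V) := {k | k ∈ G.edgeSet ∧ ∃ x y, k = s(x, y) ∧ x ∈ A ∧ y ∉ A} with hc
  have hccut : IsCut G c := ⟨A, rfl⟩
  have hcdd : c ⊆ dd := by
    rintro k ⟨hkE, x, y, rfl, hx, hy⟩
    by_contra hk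
    have hadj : H.Adj x y := deleteEdges_adj.mpr ⟨G.mem_edgeSet.mp hkE, hk⟩
    have hxr : H.Reachable v0 x := hx
    exact hy (hxr.trans hadj.reachable)
  have hcfc : FinitelyCoverable c := fc_subset hcdd hddfc
  have hoc : o ∩ c = ∅ := by
    rw [Set.eq_empty_iff_forall_notMem]
    rintro k ⟨hko, hkE, x, y, rfl, hx, hy⟩
    have hkdd : s(x, y) ∈ dd := hcdd ⟨hkE, x, y, rfl, hx, hy⟩
    have hkob : s(x, y) ∈ o ∩ b := by
      rcases hkdd with h | h
      · exact ⟨hko, h⟩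
      · rw [Set.mem_iUnion₂] at h
        obtain ⟨h', hh', hm⟩ := h
        exact absurd hm (hodfun h' hh' _ hko)
    have hkd' : s(x, y) ∉ dfun s(x, y) := hodfun _ hkob _ hko
    have hed' : s(v0, v1) ∉ dfun s(x, y) := hodfun _ hkob _ he
    set G' := G.deleteEdges (dfun s(x, y)) with hG'
    have hadj' : G'.Adj v0 v1 := deleteEdges_adj.mpr ⟨hGe, hed'⟩
    have hadjk : G'.Adj x y := deleteEdges_adj.mpr ⟨G.mem_edgeSet.mp hkE, hkd'⟩
    have hle : H ≤ G' :=
      deleteEdges_anti' (fun z hz => Or.inr (Set.mem_iUnion₂.mpr ⟨_, hkob, hz⟩))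
    have hxr : H.Reachable v0 x := hx
    have hxE' : G'.connectedComponentMk x = G'.connectedComponentMk v0 :=
      ConnectedComponent.sound (hxr.mono hle).symm
    apply hd3 _ hkob (G'.connectedComponentMk v0)
    refine ⟨edgeInComp_mk hadj', ?_⟩
    intro v hv
    rcases Sym2.mem_iff.mp hv with rfl | rfl
    · exact hxE'
    · exact (ConnectedComponent.sound hadjk.symm.reachable).trans hxE'
  have hsepc : ∀ C' : (G.deleteEdges c).ConnectedComponent,
      ¬ (EdgeInComp (G.deleteEdges c) C' s(v0, v1) ∧ EdgeInComp (G.deleteEdges c) C' g) := by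
    rintro C' ⟨h1, h2⟩
    have hv0C : (G.deleteEdges c).connectedComponentMk v0 = C' :=
      h1 v0 (Sym2.mem_mk_left v0 v1)
    have hw0C : (G.deleteEdges c).connectedComponentMk w0 = C' := h2 w0 hw0
    have hreach : (G.deleteEdges c).Reachable v0 w0 :=
      ConnectedComponent.eq.mp (hv0C.trans hw0C.symm)
    have hAclosed : ∀ x y, x ∈ A → (G.deleteEdges c).Adj x y → y ∈ A := by
      intro x y hx hxy
      by_contra hy
      rw [deleteEdges_adj] at hxy
      exact hxy.2 ⟨G.mem_edgeSet.mpr hxy.1, x, y, rfl, hx, hy⟩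
    have hv0A : v0 ∈ A := Reachable.refl v0
    have hw0A : w0 ∈ A := hreach.elim (fun p => walk_stay hAclosed p hv0A)
    have hw0r : H.Reachable v0 w0 := hw0A
    have hw0b : (G.deleteEdges b).Reachable v0 w0 := hw0r.mono (deleteEdges_anti' hbdd)
    exact hED ((ConnectedComponent.sound hw0b).trans (hgD w0 hw0))
  obtain ⟨k, hk⟩ := hgu c hccut hcfc hsepc
  rw [hoc] at hk
  exact Set.notMem_empty k hk

end GeomAux

/-- **Sublemma.** The geometric component u of e in o is geometrically connected. -/
theorem geometric_component_is_geom_connected (G : SimpleGraph V) (o : Set (Sym2 V))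
    (ho : o ⊆ G.edgeSet)
    (heven : ∀ c, IsCut G c → FinitelyCoverable c → MeetsEvenly o c)
    (e : Sym2 V) (he : e ∈ o) :
    GeomConnected G {f | f ∈ o ∧ ∀ d, IsCut G d → FinitelyCoverable d →
      (∀ C : (G.deleteEdges d).ConnectedComponent,
        ¬ (EdgeInComp (G.deleteEdges d) C e ∧ EdgeInComp (G.deleteEdges d) C f)) →
      (o ∩ d).Nonempty} := by
  revert he
  induction e using Sym2.ind with
  | _ v0 v1 =>
  intro he
  intro b hb hbfc hex
  obtain ⟨C, D, hCD, ⟨f, hfu, hfC⟩, ⟨g, hgu2, hgD⟩⟩ := hex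
  by_contra hne
  have hobfin : (o ∩ b).Finite := (heven b hb hbfc).1
  have hnu : ∀ h ∈ o ∩ b, ∃ d, IsCut G d ∧ FinitelyCoverable d ∧
      (∀ C : (G.deleteEdges d).ConnectedComponent,
        ¬ (EdgeInComp (G.deleteEdges d) C s(v0, v1) ∧ EdgeInComp (G.deleteEdges d) C h)) ∧
      o ∩ d = ∅ := by
    rintro h ⟨hho, hhb⟩
    by_contra hcon
    push_neg at hcon
    apply hne
    refine ⟨h, ⟨hho, ?_⟩, hhb⟩
    intro d hd hdf hsep
    exact hcon d hd hdf (fun C hP hQ => hsep C ⟨hP, hQ⟩)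
  by_cases heb : s(v0, v1) ∈ b
  · apply hne
    refine ⟨s(v0, v1), ⟨he, ?_⟩, heb⟩
    intro d hd hdf hsep
    by_cases hed : s(v0, v1) ∈ d
    · exact ⟨s(v0, v1), he, hed⟩
    · exfalso
      have hadj : (G.deleteEdges d).Adj v0 v1 :=
        SimpleGraph.deleteEdges_adj.mpr ⟨G.mem_edgeSet.mp (ho he), hed⟩
      exact hsep _ ⟨edgeInComp_mk hadj, edgeInComp_mk hadj⟩
  · by_cases hED : (G.deleteEdges b).connectedComponentMk v0 = D
    · have hEC : (G.deleteEdges b).connectedComponentMk v0 ≠ C := fun h => hCD (h ▸ hED)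
      obtain ⟨⟨w0, w1⟩, hgw⟩ := Quot.exists_rep f
      have hw0f : w0 ∈ f := by rw [← hgw]; exact Sym2.mem_mk_left w0 w1
      exact geomAux G o ho v0 v1 he f w0 hw0f b hbfc hobfin heb hfu.2 C hEC hfC hnu
    · obtain ⟨⟨w0, w1⟩, hgw⟩ := Quot.exists_rep g
      have hw0g : w0 ∈ g := by rw [← hgw]; exact Sym2.mem_mk_left w0 w1
      exact geomAux G o ho v0 v1 he g w0 hw0g b hbfc hobfin heb hgu2.2 D hED hgD hnu
end

section
/- Let B be a bipartite simple graph with bipartition (X, Y) such that X and Y are both infinite and every vertex of B has finite degree. Then there are infinite subsets X′ ⊆ X and Y′ ⊆ Y such that no vertex of X′ is adjacent to a vertex of Y′. -/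
namespace BipAux

variable {V : Type} (B : SimpleGraph V) (X Y : Set V)

/-- forbidden set for the next x. -/
def Sx (l : List (V × V)) : Set V := ⋃ p ∈ l, ({p.1} ∪ B.neighborSet p.2)

/-- forbidden set for the next y, given the new x. -/
def Sy (l : List (V × V)) (x : V) : Set V :=
  B.neighborSet x ∪ ⋃ p ∈ l, ({p.2} ∪ B.neighborSet p.1)

lemma Sx_fin (hdeg : ∀ v : V, (B.neighborSet v).Finite) (l : List (V × V)) :
    (Sx B l).Finite :=
  Set.Finite.biUnion l.finite_toSet fun p _ => (Set.finite_singleton _).union (hdeg _)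

lemma Sy_fin (hdeg : ∀ v : V, (B.neighborSet v).Finite) (l : List (V × V)) (x : V) :
    (Sy B l x).Finite :=
  (hdeg _).union
    (Set.Finite.biUnion l.finite_toSet fun p _ => (Set.finite_singleton _).union (hdeg _))

variable (hX : X.Infinite) (hY : Y.Infinite) (hdeg : ∀ v : V, (B.neighborSet v).Finite)

noncomputable def xPick (l : List (V × V)) : V :=
  ((hX.diff (Sx_fin B hdeg l)).nonempty).choose

lemma xPick_spec (l : List (V × V)) : xPick B X hX hdeg l ∈ X \ Sx B l :=
  ((hX.diff (Sx_fin B hdeg l)).nonempty).choose_spec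

noncomputable def yPick (l : List (V × V)) : V :=
  ((hY.diff (Sy_fin B hdeg l (xPick B X hX hdeg l))).nonempty).choose

lemma yPick_spec (l : List (V × V)) :
    yPick B X Y hX hY hdeg l ∈ Y \ Sy B l (xPick B X hX hdeg l) :=
  ((hY.diff (Sy_fin B hdeg l (xPick B X hX hdeg l))).nonempty).choose_spec

noncomputable def seqL : ℕ → List (V × V)
  | 0 => []
  | n + 1 =>
      seqL n ++ [(xPick B X hX hdeg (seqL n), yPick B X Y hX hY hdeg (seqL n))]

noncomputable def xs (n : ℕ) : V := xPick B X hX hdeg (seqL B X Y hX hY hdeg n)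

noncomputable def ys (n : ℕ) : V := yPick B X Y hX hY hdeg (seqL B X Y hX hY hdeg n)

lemma mem_seqL (p : V × V) (n : ℕ) :
    p ∈ seqL B X Y hX hY hdeg n ↔
      ∃ m < n, p = (xs B X Y hX hY hdeg m, ys B X Y hX hY hdeg m) := by
  induction n with
  | zero => simp [seqL]
  | succ n ih =>
      simp only [seqL, List.mem_append, List.mem_singleton, ih]
      constructor
      · rintro (⟨m, hm, rfl⟩ | rfl)
        · exact ⟨m, by omega, rfl⟩
        · exact ⟨n, by omega, rfl⟩
      · rintro ⟨m, hm, rfl⟩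
        rcases Nat.lt_succ_iff_lt_or_eq.mp hm with h | rfl
        · exact Or.inl ⟨m, h, rfl⟩
        · exact Or.inr rfl

end BipAux

open BipAux in
/-- **Lemma.** In a locally finite bipartite graph with both sides infinite there are
infinite subsets of the two sides with no edges between them. -/
theorem bipartite_infinite_independent {V : Type} (B : SimpleGraph V) (X Y : Set V)
    (hdisj : Disjoint X Y) (hcover : X ∪ Y = Set.univ)
    (hbip : ∀ ⦃u v : V⦄, B.Adj u v → (u ∈ X ∧ v ∈ Y) ∨ (u ∈ Y ∧ v ∈ X))
    (hX : X.Infinite) (hY : Y.Infinite)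
    (hdeg : ∀ v : V, (B.neighborSet v).Finite) :
    ∃ X' ⊆ X, ∃ Y' ⊆ Y, X'.Infinite ∧ Y'.Infinite ∧
      ∀ x ∈ X', ∀ y ∈ Y', ¬ B.Adj x y := by
  set f := xs B X Y hX hY hdeg with hf
  set g := ys B X Y hX hY hdeg with hg
  have fspec : ∀ n, f n ∈ X \ Sx B (seqL B X Y hX hY hdeg n) := fun n =>
    xPick_spec B X hX hdeg _
  have gspec : ∀ n, g n ∈ Y \ Sy B (seqL B X Y hX hY hdeg n) (f n) := fun n =>
    yPick_spec B X Y hX hY hdeg _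
  have hmem : ∀ m n, m < n → (f m, g m) ∈ seqL B X Y hX hY hdeg n := by
    intro m n h
    exact (mem_seqL B X Y hX hY hdeg _ n).mpr ⟨m, h, rfl⟩
  -- key non-adjacency
  have key : ∀ i j, ¬ B.Adj (f i) (g j) := by
    intro i j hadj
    rcases lt_trichotomy i j with h | h | h
    · exact (gspec j).2 (Or.inr (Set.mem_biUnion (hmem i j h) (Or.inr hadj)))
    · subst h; exact (gspec i).2 (Or.inl hadj)
    · exact (fspec i).2 (Set.mem_biUnion (hmem j i h) (Or.inr hadj.symm))
  -- injectivity of f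
  have finj : Function.Injective f := by
    intro m n hmn
    by_contra hne
    wlog h : m < n generalizing m n
    · exact this hmn.symm (Ne.symm hne) (by omega)
    exact (fspec n).2 (Set.mem_biUnion (hmem m n h) (Or.inl (by simp [hmn])))
  have ginj : Function.Injective g := by
    intro m n hmn
    by_contra hne
    wlog h : m < n generalizing m n
    · exact this hmn.symm (Ne.symm hne) (by omega)
    exact (gspec n).2 (Or.inr (Set.mem_biUnion (hmem m n h) (Or.inl (by simp [hmn]))))
  refine ⟨Set.range f, ?_, Set.range g, ?_, Set.infinite_range_of_injective finj,
    Set.infinite_range_of_injective ginj, ?_⟩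
  · rintro _ ⟨n, rfl⟩; exact (fspec n).1
  · rintro _ ⟨n, rfl⟩; exact (gspec n).1
  · rintro _ ⟨i, rfl⟩ _ ⟨j, rfl⟩; exact key i j
end

section
/- Let G be a simple graph and let o be an edge set of G. Define a relation ≈ on o by: e ≈ f if and only if o has nonempty intersection with every finitely coverable cut d such that no component of the graph obtained from G by deleting the edges of d contains both e and f. Then ≈ is an equivalence relation on o. -/
open SimpleGraph

variable {V : Type}

/-- **Lemma.** Being in the same geometric component is an equivalence relation on o. -/
theorem same_geometric_component_equivalence (G : SimpleGraph V) (o : Set (Sym2 V))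
    (ho : o ⊆ G.edgeSet) :
    Equivalence (fun e f : ↥o =>
      ∀ d, IsCut G d → FinitelyCoverable d →
        (∀ C : (G.deleteEdges d).ConnectedComponent,
          ¬ (EdgeInComp (G.deleteEdges d) C e.1 ∧ EdgeInComp (G.deleteEdges d) C f.1)) →
        (o ∩ d).Nonempty) := by
  constructor
  · -- reflexivity
    rintro ⟨e, he⟩ d hcut hfin hno
    by_cases hed : e ∈ d
    · exact ⟨e, he, hed⟩
    · exfalso
      obtain ⟨⟨x, y⟩, rfl⟩ := e.exists_rep
      have hadj : (G.deleteEdges d).Adj x y := by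
        simp only [SimpleGraph.deleteEdges_adj]
        exact ⟨ho he, hed⟩
      refine hno ((G.deleteEdges d).connectedComponentMk x) ?_
      have hC : ∀ v ∈ s(x, y), (G.deleteEdges d).connectedComponentMk v
          = (G.deleteEdges d).connectedComponentMk x := by
        intro v hv
        rcases Sym2.mem_iff.mp hv with rfl | rfl
        · rfl
        · exact (SimpleGraph.ConnectedComponent.connectedComponentMk_eq_of_adj hadj).symm
      exact ⟨hC, hC⟩
  · -- symmetry
    rintro ⟨e, he⟩ ⟨f, hf⟩ h d hcut hfin hno
    exact h d hcut hfin fun C hC => hno C ⟨hC.2, hC.1⟩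
  · -- transitivity
    rintro ⟨e, he⟩ ⟨f, hf⟩ ⟨g, hg⟩ hef hfg d hcut hfin hno
    by_cases hEF : ∃ C : (G.deleteEdges d).ConnectedComponent,
        EdgeInComp (G.deleteEdges d) C e ∧ EdgeInComp (G.deleteEdges d) C f
    · obtain ⟨C, hCe, hCf⟩ := hEF
      refine hfg d hcut hfin fun D hD => ?_
      obtain ⟨hDf, hDg⟩ := hD
      have hCD : C = D := by
        obtain ⟨⟨x, y⟩, rfl⟩ := f.exists_rep
        rw [← hCf x (Sym2.mem_mk_left x y), hDf x (Sym2.mem_mk_left x y)]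
      exact hno C ⟨hCe, hCD ▸ hDg⟩
    · exact hef d hcut hfin fun C hC => hEF ⟨C, hC⟩
end
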